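/- arXiv:2511.08116 — 8 statements merged into one kernel-verified Lean document; each statement's English description precedes it below -/
import Mathlib

section
/- Let λ > 0, c > 0, t > 0. Then the integral over the open disk of radius ct centered at the origin in ℝ² of the function f(x) = (λ/(2πc)) · exp(-λt + (λ/c)√(c²t² - ‖x‖²)) / √(c²t² - ‖x‖²) equals 1 - e^{-λt}. -/
open MeasureTheory Real Set Metric

/-! The density is radial, so polar coordinates reduce the integral to
`2π ∫₀^{ct} r f(r) dr`, and `r e^{k√(a² - r²)} / √(a² - r²)` has the elementary antiderivative
`-e^{k√(a² - r²)} / k`. -/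

theorem setIntegral_ball_zero_fun_norm_addHaar {E F : Type*} [NormedAddCommGroup E]
    [NormedSpace ℝ E] [FiniteDimensional ℝ E] [Nontrivial E] [MeasurableSpace E] [BorelSpace E]
    [NormedAddCommGroup F] [NormedSpace ℝ F] (μ : Measure E) [μ.IsAddHaarMeasure]
    (f : ℝ → F) (R : ℝ) :
    ∫ x in ball 0 R, f ‖x‖ ∂μ = Module.finrank ℝ E • μ.real (ball 0 1) •
      ∫ r in Ioo 0 R, r ^ (Module.finrank ℝ E - 1) • f r := by
  have hball : ball (0 : E) R = (fun x => ‖x‖) ⁻¹' Iio R := by ext; simp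
  rw [← integral_indicator measurableSet_ball, hball]
  have hcomp (x : E) : ((fun x => ‖x‖) ⁻¹' Iio R).indicator (fun x => f ‖x‖) x =
      (Iio R).indicator f ‖x‖ := indicator_comp_right _
  simp_rw [hcomp]
  rw [integral_fun_norm_addHaar]
  simp_rw [← indicator_smul_apply (Iio R) (fun r => r ^ (Module.finrank ℝ E - 1)) f,
    setIntegral_indicator measurableSet_Iio, Ioi_inter_Iio]

theorem setIntegral_ball_zero_fun_norm_euclideanSpace_fin_two (f : ℝ → ℝ) {R : ℝ} (hR : 0 ≤ R) :
    ∫ x in ball (0 : EuclideanSpace ℝ (Fin 2)) R, f ‖x‖ =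
      2 * π * ∫ r in 0..R, r * f r := by
  rw [setIntegral_ball_zero_fun_norm_addHaar, finrank_euclideanSpace_fin, measureReal_def,
    EuclideanSpace.volume_ball_fin_two, intervalIntegral.integral_of_le hR,
    integral_Ioc_eq_integral_Ioo]
  simp [ENNReal.toReal_ofReal pi_pos.le]
  ring

theorem integral_mul_exp_mul_sqrt_div_sqrt {a k : ℝ} (ha : 0 < a) (hk : k ≠ 0) :
    ∫ y in 0..a, y * (exp (k * √(a ^ 2 - y ^ 2)) / √(a ^ 2 - y ^ 2)) = (exp (k * a) - 1) / k := by
  set F : ℝ → ℝ := fun y => -exp (k * √(a ^ 2 - y ^ 2)) / k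
  have hderiv : ∀ y ∈ Ioo 0 a,
      HasDerivAt F (y * (exp (k * √(a ^ 2 - y ^ 2)) / √(a ^ 2 - y ^ 2))) y := by
    intro y ⟨hy0, hya⟩
    have hpos : 0 < a ^ 2 - y ^ 2 := by nlinarith
    have hsqrt : HasDerivAt (fun y => √(a ^ 2 - y ^ 2)) (-y / √(a ^ 2 - y ^ 2)) y := by
      convert ((hasDerivAt_pow 2 y).const_sub (a ^ 2)).sqrt hpos.ne' using 1
      field_simp
      ring
    exact (((hsqrt.const_mul k).exp.neg).div_const k).congr_deriv ((div_eq_iff hk).mpr (by ring))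
  have hcont : Continuous F := by fun_prop
  have hminmax : Ioo (min 0 a) (max 0 a) = Ioo 0 a := by rw [min_eq_left ha.le, max_eq_right ha.le]
  rw [intervalIntegral.integral_eq_sub_of_hasDerivAt_of_le ha.le hcont.continuousOn hderiv
    (intervalIntegral.intervalIntegrable_deriv_of_nonneg hcont.continuousOn (hminmax ▸ hderiv)
      (hminmax ▸ fun y hy => by have := hy.1; positivity))]
  simp [F, sqrt_sq ha.le]
  ring

theorem stmt2 (lam c t : ℝ) (hlam : 0 < lam) (hc : 0 < c) (ht : 0 < t) :
    ∫ x in {x : EuclideanSpace ℝ (Fin 2) | ‖x‖ < c * t},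
        (lam / (2 * π * c)) *
          (Real.exp (-lam * t + (lam / c) * Real.sqrt (c ^ 2 * t ^ 2 - ‖x‖ ^ 2)) /
            Real.sqrt (c ^ 2 * t ^ 2 - ‖x‖ ^ 2))
      = 1 - Real.exp (-lam * t) := by
  have hct : 0 < c * t := mul_pos hc ht
  set f : ℝ → ℝ := fun r =>
    lam / (2 * π * c) * (exp (-lam * t + lam / c * √(c ^ 2 * t ^ 2 - r ^ 2)) /
      √(c ^ 2 * t ^ 2 - r ^ 2))
  have hradial (r : ℝ) : r * f r = lam / (2 * π * c) * exp (-lam * t) *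
      (r * (exp (lam / c * √((c * t) ^ 2 - r ^ 2)) / √((c * t) ^ 2 - r ^ 2))) := by
    simp only [f, mul_pow, exp_add]
    ring
  have hexponent : lam / c * (c * t) = lam * t := by field_simp
  rw [← ball_zero_eq]
  refine (setIntegral_ball_zero_fun_norm_euclideanSpace_fin_two f hct.le).trans ?_
  rw [intervalIntegral.integral_congr fun r _ => hradial r, intervalIntegral.integral_const_mul,
    integral_mul_exp_mul_sqrt_div_sqrt hct (div_pos hlam hc).ne', hexponent, neg_mul, exp_neg]
  field_simp
end

section
/- Let λ > 0, c > 0, and let q : (0,∞) → [0,∞) be a measurable function with ∫_0^∞ q(τ) dτ = 1. Define p(x) = (λ/(2πc)) ∫_{‖x‖/c}^∞ e^{-λτ} exp((λ/c)√(c²τ² - ‖x‖²)) / √(c²τ² - ‖x‖²) · q(τ) dτ for x ∈ ℝ². Then ∫_{ℝ²} p(x) dx = 1 - ∫_0^∞ e^{-λτ} q(τ) dτ. -/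
/-!
In polar coordinates the integral of `p` is `λ/c ∫₀^∞ r ∫_{r/c}^∞ (…) dτ dr`. Exchanging the order
of integration over the region `0 < r < cτ`, the inner integral in `r` has the explicit primitive
`-(c/λ) exp((λ/c)√(c²τ² - r²))` and equals `(c/λ)(e^{λτ} - 1)`. What remains is
`∫₀^∞ (1 - e^{-λτ}) q(τ) dτ`.
-/

open MeasureTheory Real Set Function

open scoped ENNReal

lemma integral_fun_norm_euclideanSpace_fin_two {F : Type*} [NormedAddCommGroup F]
    [NormedSpace ℝ F] (f : ℝ → F) :
    ∫ x : EuclideanSpace ℝ (Fin 2), f ‖x‖ = (2 * π) • ∫ r in Ioi 0, r • f r := by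
  rw [integral_fun_norm_addHaar volume f, mul_smul, ofNat_smul_eq_nsmul]
  simp [measureReal_def, pi_nonneg]

section SqrtKernel

variable {a R : ℝ}

lemma hasDerivAt_exp_mul_sqrt_sq_sub_sq (ha : a ≠ 0) {r : ℝ} (hr : r ^ 2 < R ^ 2) :
    HasDerivAt (fun s => -a⁻¹ * exp (a * √(R ^ 2 - s ^ 2)))
      (r * (exp (a * √(R ^ 2 - r ^ 2)) / √(R ^ 2 - r ^ 2))) r := by
  have hpos : 0 < R ^ 2 - r ^ 2 := sub_pos.2 hr
  refine ((((hasDerivAt_pow 2 r).const_sub (R ^ 2)).sqrt hpos.ne').const_mul a).exp.const_mul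
    (-a⁻¹) |>.congr_deriv ?_
  field_simp
  ring

lemma lintegral_Ioo_mul_exp_mul_sqrt_div_sqrt (ha : a ≠ 0) (hR : 0 ≤ R) :
    ∫⁻ r in Ioo 0 R, ENNReal.ofReal (r * (exp (a * √(R ^ 2 - r ^ 2)) / √(R ^ 2 - r ^ 2))) =
      ENNReal.ofReal ((exp (a * R) - 1) / a) := by
  set k : ℝ → ℝ := fun r => r * (exp (a * √(R ^ 2 - r ^ 2)) / √(R ^ 2 - r ^ 2))
  set G : ℝ → ℝ := fun s => -a⁻¹ * exp (a * √(R ^ 2 - s ^ 2))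
  have hG : Continuous G := by fun_prop
  have hderiv : ∀ r ∈ Ioo 0 R, HasDerivAt G (k r) r := fun r hr =>
    hasDerivAt_exp_mul_sqrt_sq_sub_sq ha (pow_lt_pow_left₀ hr.2 hr.1.le two_ne_zero)
  have hk_nonneg : ∀ r ∈ Ioc 0 R, 0 ≤ k r := fun r hr => by have := hr.1.le; positivity
  have hk_int : IntegrableOn k (Ioc 0 R) :=
    intervalIntegral.integrableOn_deriv_of_nonneg hG.continuousOn hderiv
      fun r hr => hk_nonneg r (Ioo_subset_Ioc_self hr)
  have hftc := intervalIntegral.integral_eq_sub_of_hasDeriv_right_of_le hR hG.continuousOn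
    (fun r hr => (hderiv r hr).hasDerivWithinAt)
    ((intervalIntegrable_iff_integrableOn_Ioc_of_le hR).2 hk_int)
  rw [intervalIntegral.integral_of_le hR] at hftc
  rw [Measure.restrict_congr_set Ioo_ae_eq_Ioc,
    ← ofReal_integral_eq_lintegral_ofReal hk_int
      ((ae_restrict_iff' measurableSet_Ioc).2 (ae_of_all _ hk_nonneg)), hftc]
  simp only [G, sub_self, sqrt_zero, mul_zero, exp_zero, zero_pow two_ne_zero, sub_zero,
    sqrt_sq hR]
  congr 1
  field_simp
  ring

end SqrtKernel

section RegionSwap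

variable {F : ℝ → ℝ → ℝ≥0∞}

lemma measurable_uncurry_indicator_Ioi {b : ℝ → ℝ} (hb : Measurable b)
    (hF : Measurable (uncurry F)) :
    Measurable (uncurry fun r τ => (Ioi (b r)).indicator (F r) τ) := by
  have h : (uncurry fun r τ => (Ioi (b r)).indicator (F r) τ) =
      {p : ℝ × ℝ | b p.1 < p.2}.indicator (uncurry F) := by
    ext ⟨r, τ⟩
    simp [indicator_apply]
  rw [h]
  exact hF.indicator (measurableSet_lt (hb.comp measurable_fst) measurable_snd)

lemma measurable_setLIntegral_Ioi {b : ℝ → ℝ} (hb : Measurable b)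
    (hF : Measurable (uncurry F)) :
    Measurable fun r => ∫⁻ τ in Ioi (b r), F r τ := by
  simp_rw [← lintegral_indicator measurableSet_Ioi]
  exact (measurable_uncurry_indicator_Ioi hb hF).lintegral_prod_right

lemma lintegral_Ioi_lintegral_Ioi_div_swap {c : ℝ} (hc : 0 < c)
    (hF : Measurable (uncurry F)) :
    ∫⁻ r in Ioi 0, ∫⁻ τ in Ioi (r / c), F r τ =
      ∫⁻ τ in Ioi 0, ∫⁻ r in Ioo 0 (c * τ), F r τ := by
  simp_rw [← lintegral_indicator measurableSet_Ioi (f := F _)]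
  rw [lintegral_lintegral_swap
    (measurable_uncurry_indicator_Ioi (b := (· / c)) (measurable_id.div_const c) hF).aemeasurable,
    ← lintegral_indicator measurableSet_Ioi]
  congr 1
  ext τ
  have h : ∀ r, (Ioi (r / c)).indicator (F r) τ = (Iio (c * τ)).indicator (fun r => F r τ) r := by
    intro r
    simp only [indicator_apply, mem_Ioi, mem_Iio, div_lt_iff₀ hc, mul_comm]
  simp_rw [h]
  rw [lintegral_indicator measurableSet_Iio, Measure.restrict_restrict measurableSet_Iio,
    Iio_inter_Ioi]
  rcases lt_or_ge 0 τ with hτ | hτ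
  · rw [indicator_of_mem (mem_Ioi.2 hτ)]
  · rw [indicator_of_notMem (notMem_Ioi.2 hτ), Ioo_eq_empty (by nlinarith),
      Measure.restrict_empty, lintegral_zero_measure]

end RegionSwap

lemma MeasureTheory.IntegrableOn.exp_neg_mul_mul {lam : ℝ} (hlam : 0 ≤ lam) {q : ℝ → ℝ}
    (hq : IntegrableOn q (Ioi 0)) : IntegrableOn (fun τ => exp (-lam * τ) * q τ) (Ioi 0) :=
  hq.bdd_mul (by fun_prop) ((ae_restrict_iff' measurableSet_Ioi).2 (ae_of_all _ fun τ hτ => by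
    rw [norm_of_nonneg (exp_pos _).le, exp_le_one_iff]
    nlinarith [mem_Ioi.1 hτ]))

/-- `p x = λ / (2πc) * ∫ τ in Ioi (‖x‖ / c), lifetimeKernel λ c q ‖x‖ τ`. -/
noncomputable def lifetimeKernel (lam c : ℝ) (q : ℝ → ℝ) (r τ : ℝ) : ℝ :=
  exp (-lam * τ) * (exp ((lam / c) * √(c ^ 2 * τ ^ 2 - r ^ 2)) / √(c ^ 2 * τ ^ 2 - r ^ 2)) * q τ

section LifetimeKernel

variable {lam c : ℝ} {q : ℝ → ℝ}

lemma measurable_lifetimeKernel (hq : Measurable q) :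
    Measurable (uncurry (lifetimeKernel lam c q)) := by
  unfold lifetimeKernel
  fun_prop

lemma lifetimeKernel_nonneg {r τ : ℝ} (hq : 0 ≤ q τ) : 0 ≤ lifetimeKernel lam c q r τ := by
  unfold lifetimeKernel
  positivity

lemma lintegral_Ioo_mul_lifetimeKernel (hlam : 0 < lam) (hc : 0 < c) {τ : ℝ} (hτ : 0 < τ)
    (hq : 0 ≤ q τ) :
    ∫⁻ r in Ioo 0 (c * τ), ENNReal.ofReal (r * lifetimeKernel lam c q r τ) =
      ENNReal.ofReal (c / lam * (q τ - exp (-lam * τ) * q τ)) := by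
  have h : ∀ r, r * lifetimeKernel lam c q r τ = exp (-lam * τ) * q τ *
      (r * (exp (lam / c * √((c * τ) ^ 2 - r ^ 2)) / √((c * τ) ^ 2 - r ^ 2))) := by
    intro r
    simp only [lifetimeKernel, mul_pow]
    ring
  simp_rw [h, ENNReal.ofReal_mul (by positivity : 0 ≤ exp (-lam * τ) * q τ)]
  rw [lintegral_const_mul' _ _ ENNReal.ofReal_ne_top,
    lintegral_Ioo_mul_exp_mul_sqrt_div_sqrt (by positivity) (by positivity),
    ← ENNReal.ofReal_mul (by positivity)]
  congr 1
  rw [show lam / c * (c * τ) = lam * τ by field_simp, neg_mul, exp_neg]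
  field_simp

lemma integral_mul_integral_Ioi_div_lifetimeKernel (hlam : 0 < lam) (hc : 0 < c)
    (hq_meas : Measurable q) (hq_nonneg : ∀ τ ∈ Ioi (0 : ℝ), 0 ≤ q τ)
    (hq : IntegrableOn q (Ioi 0)) :
    ∫ r in Ioi 0, r * ∫ τ in Ioi (r / c), lifetimeKernel lam c q r τ =
      c / lam * ((∫ τ in Ioi 0, q τ) - ∫ τ in Ioi 0, exp (-lam * τ) * q τ) := by
  set G : ℝ → ℝ≥0∞ := fun r => ∫⁻ τ in Ioi (r / c), ENNReal.ofReal (r * lifetimeKernel lam c q r τ)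
  set h : ℝ → ℝ := fun τ => c / lam * (q τ - exp (-lam * τ) * q τ)
  have hF : Measurable (uncurry fun r τ => ENNReal.ofReal (r * lifetimeKernel lam c q r τ)) :=
    (measurable_fst.mul (measurable_lifetimeKernel hq_meas)).ennreal_ofReal
  have hG_meas : Measurable G := measurable_setLIntegral_Ioi (measurable_id.div_const c) hF
  have heq := hq.exp_neg_mul_mul hlam.le
  have hh_nonneg : 0 ≤ᵐ[volume.restrict (Ioi 0)] h :=
    (ae_restrict_iff' measurableSet_Ioi).2 (ae_of_all _ fun τ hτ => by
      have : exp (-lam * τ) ≤ 1 := exp_le_one_iff.2 (by nlinarith [mem_Ioi.1 hτ])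
      have := hq_nonneg τ hτ
      simp only [h, Pi.zero_apply]
      exact mul_nonneg (by positivity) (by nlinarith))
  have hh_int : IntegrableOn h (Ioi 0) := (hq.sub heq).const_mul _
  have hG : ∫⁻ r in Ioi 0, G r = ENNReal.ofReal (∫ τ in Ioi 0, h τ) := by
    rw [lintegral_Ioi_lintegral_Ioi_div_swap hc hF,
      ofReal_integral_eq_lintegral_ofReal hh_int hh_nonneg]
    exact setLIntegral_congr_fun measurableSet_Ioi fun τ hτ =>
      lintegral_Ioo_mul_lifetimeKernel hlam hc hτ (hq_nonneg τ hτ)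
  have hG_fin : ∀ᵐ r ∂volume.restrict (Ioi 0), G r < ⊤ :=
    ae_lt_top hG_meas (hG ▸ ENNReal.ofReal_ne_top)
  calc ∫ r in Ioi 0, r * ∫ τ in Ioi (r / c), lifetimeKernel lam c q r τ
      = ∫ r in Ioi 0, (G r).toReal := by
        refine setIntegral_congr_fun measurableSet_Ioi fun r hr => ?_
        rw [← integral_const_mul, integral_eq_lintegral_of_nonneg_ae]
        · exact (ae_restrict_iff' measurableSet_Ioi).2 (ae_of_all _ fun τ hτ =>
            mul_nonneg (mem_Ioi.1 hr).le (lifetimeKernel_nonneg (hq_nonneg τ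
              (lt_of_le_of_lt (div_nonneg (mem_Ioi.1 hr).le hc.le) hτ))))
        · exact (measurable_const.mul
            ((measurable_lifetimeKernel hq_meas).comp measurable_prodMk_left)).aestronglyMeasurable
    _ = (∫⁻ r in Ioi 0, G r).toReal := integral_toReal hG_meas.aemeasurable hG_fin
    _ = ∫ τ in Ioi 0, h τ := by rw [hG, ENNReal.toReal_ofReal (integral_nonneg_of_ae hh_nonneg)]
    _ = c / lam * ((∫ τ in Ioi 0, q τ) - ∫ τ in Ioi 0, exp (-lam * τ) * q τ) := by
        rw [integral_const_mul, integral_sub hq heq]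

end LifetimeKernel

theorem stmt3 (lam c : ℝ) (hlam : 0 < lam) (hc : 0 < c)
    (q : ℝ → ℝ) (hq_meas : Measurable q) (hq_nonneg : ∀ τ ∈ Ioi (0 : ℝ), 0 ≤ q τ)
    (hq_int : ∫ τ in Ioi (0 : ℝ), q τ = 1)
    (p : EuclideanSpace ℝ (Fin 2) → ℝ)
    (hp : ∀ x, p x = (lam / (2 * π * c)) *
        ∫ τ in Ioi (‖x‖ / c),
          Real.exp (-lam * τ) *
            (Real.exp ((lam / c) * Real.sqrt (c ^ 2 * τ ^ 2 - ‖x‖ ^ 2)) /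
              Real.sqrt (c ^ 2 * τ ^ 2 - ‖x‖ ^ 2)) * q τ) :
    ∫ x : EuclideanSpace ℝ (Fin 2), p x
      = 1 - ∫ τ in Ioi (0 : ℝ), Real.exp (-lam * τ) * q τ := by
  have hq : IntegrableOn q (Ioi 0) := Integrable.of_integral_ne_zero (by simp [hq_int])
  calc ∫ x : EuclideanSpace ℝ (Fin 2), p x
      = lam / (2 * π * c) * ∫ x : EuclideanSpace ℝ (Fin 2),
          ∫ τ in Ioi (‖x‖ / c), lifetimeKernel lam c q ‖x‖ τ := by
        rw [← integral_const_mul]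
        exact integral_congr_ae (ae_of_all _ hp)
    _ = lam / (2 * π * c) * (2 * π * ∫ r in Ioi 0, r * ∫ τ in Ioi (r / c),
          lifetimeKernel lam c q r τ) := by
        rw [integral_fun_norm_euclideanSpace_fin_two
          fun r => ∫ τ in Ioi (r / c), lifetimeKernel lam c q r τ]
        rfl
    _ = 1 - ∫ τ in Ioi (0 : ℝ), Real.exp (-lam * τ) * q τ := by
        rw [integral_mul_integral_Ioi_div_lifetimeKernel hlam hc hq_meas hq_nonneg hq, hq_int]
        field_simp [pi_ne_zero]
end

section
/- Let λ > 0, μ > 0, c > 0 and define, for x ∈ ℝ² with ‖x‖ > 0, p_h(x) = (λμ/(2πc)) ∫_{‖x‖/c}^∞ e^{-(λ+μ)τ} exp((λ/c)√(c²τ² - ‖x‖²)) / √(c²τ² - ‖x‖²) dτ. Then p_h(x) = (λμ/(2π^{3/2} c²)) ∑_{k=0}^∞ (λ^k/k!) Γ((k+1)/2) (2‖x‖/(c(λ+μ)))^{k/2} K_{k/2}((λ+μ)‖x‖/c), where K_ν is the McDonald function of order ν. -/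
/-!
The substitution `τ = (‖x‖ / c) cosh u` turns the integral into
`(1 / c) ∫₀^∞ exp (-z cosh u) exp (w sinh u) du`, where `z = (λ + μ) ‖x‖ / c` and
`w = λ ‖x‖ / c`. Since `|w| < z`, `exp (w sinh u)` may be expanded under the integral
(dominated convergence), which reduces the claim to
`∫₀^∞ exp (-z cosh u) sinh u ^ k du = Γ ((k + 1) / 2) / √π * (2 / z) ^ (k / 2) * K_{k/2}(z)`.
This is proved by induction on `k` in steps of two, together with the companion formula for
`cosh u * sinh u ^ k` and `K_{k/2+1}`: integrating by parts against `d (exp (-z cosh u))` links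
these integrals to each other, and also yields the recurrence `z (K_{ν+1} - K_{ν-1}) = 2 ν K_ν`.
The base cases are `K₀`, `K₁` and the Gaussian integral `K_{1/2}(z) = √(π / (2 z)) exp (-z)`.
-/

open MeasureTheory Real Set

/-- McDonald function (modified Bessel function of the second kind) of order `ν`,
via its integral representation `K_ν z = ∫_0^∞ e^{-z cosh u} cosh (ν u) du`. -/
noncomputable def besselK (ν z : ℝ) : ℝ :=
  ∫ u in Ioi (0 : ℝ), Real.exp (-z * Real.cosh u) * Real.cosh (ν * u)

open Filter Asymptotics Topology

namespace Real

lemma cosh_le_exp_abs (x : ℝ) : cosh x ≤ exp |x| := by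
  rw [← cosh_abs, cosh_eq]
  linarith [exp_le_exp.2 (neg_le_self (abs_nonneg x))]

lemma abs_sinh_le_cosh (x : ℝ) : |sinh x| ≤ cosh x := by
  rw [abs_sinh, ← cosh_abs]
  exact (sinh_lt_cosh _).le

lemma cosh_mul_le_exp_mul (ν : ℝ) {u : ℝ} (hu : 0 ≤ u) :
    cosh (ν * u) ≤ exp (|ν| * u) := by
  simpa only [abs_mul, abs_of_nonneg hu] using cosh_le_exp_abs (ν * u)

lemma exp_mul_isBigO_exp_mul {a b : ℝ} (hab : a ≤ b) :
    (fun u => exp (a * u)) =O[atTop] fun u => exp (b * u) := by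
  refine Eventually.isBigO ?_
  filter_upwards [eventually_ge_atTop 0] with u hu
  rw [norm_of_nonneg (exp_pos _).le, exp_le_exp]
  exact mul_le_mul_of_nonneg_right hab hu

lemma exp_neg_mul_cosh_mul_exp_isBigO {z : ℝ} (hz : 0 < z) (a : ℝ) :
    (fun u => exp (-z * cosh u) * exp (a * u)) =O[atTop] fun u => exp (-1 * u) := by
  refine Eventually.isBigO ?_
  filter_upwards [eventually_ge_atTop (max 0 (4 * (a + 1) / z))] with u hu
  have hu0 : 0 ≤ u := le_of_max_le_left hu
  have hua : 4 * (a + 1) ≤ z * u := by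
    have := le_of_max_le_right hu
    rw [div_le_iff₀ hz] at this
    linarith
  have hcosh : u ^ 2 / 4 ≤ cosh u := by
    rw [cosh_eq]
    linarith [quadratic_le_exp_of_nonneg hu0, exp_pos (-u)]
  rw [← exp_add, norm_of_nonneg (exp_pos _).le, exp_le_exp]
  nlinarith

end Real

def IsExpBounded (f : ℝ → ℝ) : Prop :=
  Continuous f ∧ ∃ a : ℝ, f =O[atTop] fun u => exp (a * u)

lemma isExpBounded_const (c : ℝ) : IsExpBounded fun _ => c :=
  ⟨continuous_const, 0, by simpa using isBigO_const_const c (one_ne_zero (α := ℝ)) atTop⟩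

lemma isExpBounded_cosh_mul (ν : ℝ) : IsExpBounded fun u => cosh (ν * u) := by
  refine ⟨by fun_prop, |ν|, Eventually.isBigO ?_⟩
  filter_upwards [eventually_ge_atTop 0] with u hu
  rw [norm_of_nonneg (cosh_pos _).le]
  exact cosh_mul_le_exp_mul ν hu

lemma isExpBounded_sinh_mul (ν : ℝ) : IsExpBounded fun u => sinh (ν * u) := by
  refine ⟨by fun_prop, |ν|, Eventually.isBigO ?_⟩
  filter_upwards [eventually_ge_atTop 0] with u hu
  exact (abs_sinh_le_cosh _).trans (cosh_mul_le_exp_mul ν hu)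

lemma isExpBounded_sinh : IsExpBounded sinh := by simpa using isExpBounded_sinh_mul 1

lemma isExpBounded_cosh : IsExpBounded cosh := by simpa using isExpBounded_cosh_mul 1

namespace IsExpBounded

variable {f g : ℝ → ℝ} {z : ℝ}

lemma mul (hf : IsExpBounded f) (hg : IsExpBounded g) : IsExpBounded fun u => f u * g u := by
  obtain ⟨hfc, a, ha⟩ := hf
  obtain ⟨hgc, b, hb⟩ := hg
  refine ⟨hfc.mul hgc, a + b, (ha.mul hb).congr_right fun u => ?_⟩
  rw [← exp_add, add_mul]

lemma add (hf : IsExpBounded f) (hg : IsExpBounded g) : IsExpBounded fun u => f u + g u := by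
  obtain ⟨hfc, a, ha⟩ := hf
  obtain ⟨hgc, b, hb⟩ := hg
  exact ⟨hfc.add hgc, max a b, (ha.trans (exp_mul_isBigO_exp_mul (le_max_left a b))).add
    (hb.trans (exp_mul_isBigO_exp_mul (le_max_right a b)))⟩

lemma pow (hf : IsExpBounded f) (k : ℕ) : IsExpBounded fun u => f u ^ k := by
  induction k with
  | zero => simpa using isExpBounded_const 1
  | succ k ih => simpa only [pow_succ] using ih.mul hf

lemma exp_neg_mul_cosh_mul_isBigO (hf : IsExpBounded f) (hz : 0 < z) :
    (fun u => exp (-z * cosh u) * f u) =O[atTop] fun u => exp (-1 * u) :=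
  let ⟨_, a, ha⟩ := hf
  ((isBigO_refl _ _).mul ha).trans (exp_neg_mul_cosh_mul_exp_isBigO hz a)

lemma integrableOn_exp_neg_mul_cosh_mul (hf : IsExpBounded f) (hz : 0 < z) (a : ℝ) :
    IntegrableOn (fun u => exp (-z * cosh u) * f u) (Ioi a) :=
  integrable_of_isBigO_exp_neg one_pos
    ((continuous_exp.comp (continuous_const.mul continuous_cosh)).mul hf.1).continuousOn
    (hf.exp_neg_mul_cosh_mul_isBigO hz)

lemma tendsto_exp_neg_mul_cosh_mul (hf : IsExpBounded f) (hz : 0 < z) :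
    Tendsto (fun u => exp (-z * cosh u) * f u) atTop (𝓝 0) :=
  (hf.exp_neg_mul_cosh_mul_isBigO hz).trans_tendsto <| by
    simpa using tendsto_exp_neg_atTop_nhds_zero

end IsExpBounded

noncomputable def expCoshIntegral (z : ℝ) (f : ℝ → ℝ) : ℝ :=
  ∫ u in Ioi (0 : ℝ), exp (-z * cosh u) * f u

section expCoshIntegral

variable {f g : ℝ → ℝ} {z : ℝ}

lemma expCoshIntegral_const_mul (c : ℝ) :
    expCoshIntegral z (fun u => c * f u) = c * expCoshIntegral z f := by
  simp only [expCoshIntegral, ← integral_const_mul, mul_left_comm]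

lemma expCoshIntegral_add (hf : IsExpBounded f) (hg : IsExpBounded g) (hz : 0 < z) :
    expCoshIntegral z (fun u => f u + g u) = expCoshIntegral z f + expCoshIntegral z g := by
  simp only [expCoshIntegral, mul_add]
  exact integral_add (hf.integrableOn_exp_neg_mul_cosh_mul hz 0)
    (hg.integrableOn_exp_neg_mul_cosh_mul hz 0)

lemma expCoshIntegral_sub (hf : IsExpBounded f) (hg : IsExpBounded g) (hz : 0 < z) :
    expCoshIntegral z (fun u => f u - g u) = expCoshIntegral z f - expCoshIntegral z g := by
  simp only [expCoshIntegral, mul_sub]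
  exact integral_sub (hf.integrableOn_exp_neg_mul_cosh_mul hz 0)
    (hg.integrableOn_exp_neg_mul_cosh_mul hz 0)

theorem expCoshIntegral_deriv {g' : ℝ → ℝ} (hz : 0 < z) (hg : ∀ u, HasDerivAt g (g' u) u)
    (hgb : IsExpBounded g) (hg'b : IsExpBounded g') :
    expCoshIntegral z g' = z * expCoshIntegral z (fun u => sinh u * g u) - exp (-z) * g 0 := by
  have hsg : IsExpBounded fun u => sinh u * g u := isExpBounded_sinh.mul hgb
  have hderiv : ∀ u ∈ Ici (0 : ℝ), HasDerivAt (fun u => exp (-z * cosh u) * g u)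
      (exp (-z * cosh u) * g' u - z * (exp (-z * cosh u) * (sinh u * g u))) u := by
    intro u _
    exact (((hasDerivAt_cosh u).const_mul (-z)).exp.mul (hg u)).congr_deriv (by ring)
  have h := integral_Ioi_of_hasDerivAt_of_tendsto' hderiv
    ((hg'b.integrableOn_exp_neg_mul_cosh_mul hz 0).sub
      ((hsg.integrableOn_exp_neg_mul_cosh_mul hz 0).const_mul z))
    (hgb.tendsto_exp_neg_mul_cosh_mul hz)
  rw [integral_sub (hg'b.integrableOn_exp_neg_mul_cosh_mul hz 0)
    ((hsg.integrableOn_exp_neg_mul_cosh_mul hz 0).const_mul z), integral_const_mul] at h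
  simp only [cosh_zero, mul_one, zero_sub] at h
  simp only [expCoshIntegral]
  linarith

end expCoshIntegral

lemma besselK_eq_expCoshIntegral (ν z : ℝ) :
    besselK ν z = expCoshIntegral z fun u => cosh (ν * u) := rfl

lemma besselK_neg (ν z : ℝ) : besselK (-ν) z = besselK ν z := by
  simp only [besselK, neg_mul, cosh_neg]

theorem besselK_add_one_sub_besselK_sub_one (ν : ℝ) {z : ℝ} (hz : 0 < z) :
    z * (besselK (ν + 1) z - besselK (ν - 1) z) = 2 * ν * besselK ν z := by
  have hderiv : ∀ u, HasDerivAt (fun u => sinh (ν * u)) (ν * cosh (ν * u)) u := fun u =>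
    ((hasDerivAt_id u).const_mul ν).sinh.congr_deriv (by rw [id, mul_one, mul_comm])
  have h := expCoshIntegral_deriv hz hderiv (isExpBounded_sinh_mul ν)
    ((isExpBounded_const ν).mul (isExpBounded_cosh_mul ν))
  have hprod : (fun u => sinh u * sinh (ν * u))
      = fun u => (1 / 2) * (cosh ((ν + 1) * u) - cosh ((ν - 1) * u)) := by
    ext u
    rw [add_mul, sub_mul, one_mul, cosh_add, cosh_sub]
    ring
  simp only [hprod, expCoshIntegral_const_mul] at h
  rw [expCoshIntegral_sub (isExpBounded_cosh_mul _) (isExpBounded_cosh_mul _) hz] at h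
  simp only [mul_zero, sinh_zero, sub_zero] at h
  simp only [besselK_eq_expCoshIntegral]
  linarith

theorem besselK_one_half (z : ℝ) :
    besselK (1 / 2) z = √(π / (2 * z)) * exp (-z) := by
  have hderiv : ∀ u ∈ Ioi (0 : ℝ),
      HasDerivWithinAt (fun u => sinh (u / 2)) (cosh (u / 2) / 2) (Ioi 0) u := fun u _ =>
    (((hasDerivAt_id u).div_const 2).sinh.congr_deriv (by rw [id, mul_one_div])).hasDerivWithinAt
  have hinj : InjOn (fun u => sinh (u / 2)) (Ioi 0) := fun a _ b _ hab => by
    linarith [sinh_injective hab]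
  have himage : (fun u => sinh (u / 2)) '' Ioi 0 = Ioi 0 := by
    ext w
    refine ⟨fun ⟨u, hu, hw⟩ => hw ▸ sinh_pos_iff.2 (half_pos hu), fun hw => ?_⟩
    exact ⟨2 * arsinh w, by simpa using arsinh_pos_iff.2 hw, by simp [sinh_arsinh]⟩
  -- `w = sinh (u / 2)` turns the integrand into a Gaussian, as `cosh u = 1 + 2 w ^ 2`
  have hintegrand : ∀ u : ℝ,
      |cosh (u / 2) / 2| • (2 * exp (-z) * exp (-(2 * z) * sinh (u / 2) ^ 2))
        = exp (-z * cosh u) * cosh (1 / 2 * u) := fun u => by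
    have hcosh : cosh u = 1 + 2 * sinh (u / 2) ^ 2 := by
      have h := cosh_two_mul (u / 2)
      rw [mul_div_cancel₀ u two_ne_zero, cosh_sq] at h
      linarith
    rw [abs_of_pos (by positivity), smul_eq_mul, hcosh, one_div_mul_eq_div,
      show -z * (1 + 2 * sinh (u / 2) ^ 2) = -z + -(2 * z) * sinh (u / 2) ^ 2 by ring, exp_add]
    ring
  have h := integral_image_eq_integral_abs_deriv_smul measurableSet_Ioi hderiv hinj
    fun w => 2 * exp (-z) * exp (-(2 * z) * w ^ 2)
  rw [himage, integral_const_mul, integral_gaussian_Ioi] at h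
  simp only [hintegrand] at h
  rw [besselK, ← h]
  ring

lemma rpow_half_mul_besselK_one_half {z : ℝ} (hz : 0 < z) :
    (2 / z) ^ ((1 : ℝ) / 2) * besselK (1 / 2) z = √π * exp (-z) / z := by
  rw [besselK_one_half, ← sqrt_eq_rpow, ← mul_assoc, ← sqrt_mul (by positivity),
    show 2 / z * (π / (2 * z)) = π / z ^ 2 by field_simp, sqrt_div pi_pos.le, sqrt_sq hz.le]
  ring

lemma besselK_three_halves {z : ℝ} (hz : 0 < z) :
    z * besselK (1 / 2 + 1) z = (z + 1) * besselK (1 / 2) z := by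
  have h := besselK_add_one_sub_besselK_sub_one (1 / 2) hz
  rw [show (1 : ℝ) / 2 - 1 = -(1 / 2) by norm_num, besselK_neg] at h
  linarith

section sinhPow

variable {z : ℝ}

lemma expCoshIntegral_sinh (hz : 0 < z) : expCoshIntegral z sinh = exp (-z) / z := by
  have h := expCoshIntegral_deriv hz (fun u => hasDerivAt_const u (1 : ℝ))
    (isExpBounded_const 1) (isExpBounded_const 0)
  have h0 : expCoshIntegral z (fun _ => 0) = 0 := by simp [expCoshIntegral]
  simp only [h0, mul_one] at h
  rw [eq_div_iff hz.ne', mul_comm]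
  linarith

lemma expCoshIntegral_cosh_mul_sinh (hz : 0 < z) :
    z * expCoshIntegral z (fun u => cosh u * sinh u) = expCoshIntegral z sinh + exp (-z) := by
  have h := expCoshIntegral_deriv hz hasDerivAt_cosh isExpBounded_cosh isExpBounded_sinh
  simp only [cosh_zero, mul_one, mul_comm (sinh _)] at h
  linarith

lemma expCoshIntegral_sinh_pow_add_two (hz : 0 < z) (k : ℕ) :
    z * expCoshIntegral z (fun u => sinh u ^ (k + 2))
      = (k + 1) * expCoshIntegral z (fun u => cosh u * sinh u ^ k) := by
  have hderiv : ∀ u, HasDerivAt (fun u => sinh u ^ (k + 1))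
      ((k + 1) * (cosh u * sinh u ^ k)) u := fun u =>
    ((hasDerivAt_sinh u).pow (k + 1)).congr_deriv (by push_cast; ring)
  have h := expCoshIntegral_deriv hz hderiv (isExpBounded_sinh.pow _)
    ((isExpBounded_const _).mul (isExpBounded_cosh.mul (isExpBounded_sinh.pow k)))
  simp only [expCoshIntegral_const_mul, sinh_zero, zero_pow k.succ_ne_zero, mul_zero, sub_zero,
    ← pow_succ'] at h
  exact h.symm

lemma expCoshIntegral_cosh_mul_sinh_pow_add_two (hz : 0 < z) (k : ℕ) :
    z * expCoshIntegral z (fun u => cosh u * sinh u ^ (k + 2))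
      = (k + 2) * expCoshIntegral z (fun u => sinh u ^ (k + 2))
        + (k + 1) * expCoshIntegral z (fun u => sinh u ^ k) := by
  have hderiv : ∀ u, HasDerivAt (fun u => cosh u * sinh u ^ (k + 1))
      ((k + 2) * sinh u ^ (k + 2) + (k + 1) * sinh u ^ k) u := fun u =>
    ((hasDerivAt_cosh u).mul ((hasDerivAt_sinh u).pow (k + 1))).congr_deriv <| by
      simp only [Pi.pow_apply]
      push_cast
      linear_combination (k + 1) * sinh u ^ k * cosh_sq u
  have h := expCoshIntegral_deriv hz hderiv (isExpBounded_cosh.mul (isExpBounded_sinh.pow _))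
    (((isExpBounded_const _).mul (isExpBounded_sinh.pow _)).add
      ((isExpBounded_const _).mul (isExpBounded_sinh.pow _)))
  rw [expCoshIntegral_add ((isExpBounded_const _).mul (isExpBounded_sinh.pow _))
    ((isExpBounded_const _).mul (isExpBounded_sinh.pow _)) hz] at h
  simp only [expCoshIntegral_const_mul, sinh_zero, zero_pow k.succ_ne_zero, mul_zero, sub_zero,
    mul_left_comm (sinh _), ← pow_succ'] at h
  exact h.symm

lemma expCoshIntegral_sinh_pow_add_two_of_eq (hz : 0 < z) (k : ℕ) (A : ℝ)
    (hS : expCoshIntegral z (fun u => sinh u ^ k) = A * besselK ((k : ℝ) / 2) z)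
    (hC : expCoshIntegral z (fun u => cosh u * sinh u ^ k) = A * besselK ((k : ℝ) / 2 + 1) z) :
    expCoshIntegral z (fun u => sinh u ^ (k + 2))
        = (k + 1) / z * A * besselK ((k : ℝ) / 2 + 1) z ∧
      expCoshIntegral z (fun u => cosh u * sinh u ^ (k + 2))
        = (k + 1) / z * A * besselK ((k : ℝ) / 2 + 2) z := by
  have hK := besselK_add_one_sub_besselK_sub_one ((k : ℝ) / 2 + 1) hz
  rw [show (k : ℝ) / 2 + 1 + 1 = k / 2 + 2 by ring, add_sub_cancel_right] at hK
  set K₁ := besselK ((k : ℝ) / 2 + 1) z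
  have hS2 : expCoshIntegral z (fun u => sinh u ^ (k + 2)) = (k + 1) / z * A * K₁ := by
    field_simp
    linear_combination expCoshIntegral_sinh_pow_add_two hz k + (k + 1) * hC
  refine ⟨hS2, mul_left_cancel₀ hz.ne' ?_⟩
  rw [expCoshIntegral_cosh_mul_sinh_pow_add_two hz k, hS2, hS]
  set K₀ := besselK ((k : ℝ) / 2) z
  set K₂ := besselK ((k : ℝ) / 2 + 2) z
  field_simp
  linear_combination -A * hK

end sinhPow

theorem expCoshIntegral_sinh_pow {z : ℝ} (hz : 0 < z) (k : ℕ) :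
    expCoshIntegral z (fun u => sinh u ^ k)
        = Gamma (((k : ℝ) + 1) / 2) / √π * (2 / z) ^ ((k : ℝ) / 2)
          * besselK ((k : ℝ) / 2) z ∧
      expCoshIntegral z (fun u => cosh u * sinh u ^ k)
        = Gamma (((k : ℝ) + 1) / 2) / √π * (2 / z) ^ ((k : ℝ) / 2)
          * besselK ((k : ℝ) / 2 + 1) z := by
  induction k using Nat.twoStepInduction with
  | zero => norm_num [Gamma_one_half_eq, besselK_eq_expCoshIntegral, (sqrt_pos.2 pi_pos).ne']
  | one =>
    simp only [Nat.cast_one, pow_one, show ((1 : ℝ) + 1) / 2 = 1 by norm_num, Gamma_one,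
      expCoshIntegral_sinh hz]
    refine ⟨by rw [mul_assoc, rpow_half_mul_besselK_one_half hz]; field_simp, ?_⟩
    apply mul_left_cancel₀ hz.ne'
    rw [expCoshIntegral_cosh_mul_sinh hz, expCoshIntegral_sinh hz, mul_left_comm,
      besselK_three_halves hz, mul_left_comm, mul_assoc, rpow_half_mul_besselK_one_half hz]
    field_simp
    ring
  | more k ih _ =>
    have hcoef :
        Gamma ((((k + 2 : ℕ) : ℝ) + 1) / 2) / √π * (2 / z) ^ (((k + 2 : ℕ) : ℝ) / 2)
        = (k + 1) / z * (Gamma (((k : ℝ) + 1) / 2) / √π * (2 / z) ^ ((k : ℝ) / 2)) := by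
      rw [show (((k + 2 : ℕ) : ℝ) + 1) / 2 = ((k : ℝ) + 1) / 2 + 1 by push_cast; ring,
        Gamma_add_one (by positivity), show ((k + 2 : ℕ) : ℝ) / 2 = (k : ℝ) / 2 + 1 by
          push_cast; ring, rpow_add_one (by positivity)]
      field_simp
    rw [hcoef, show ((k + 2 : ℕ) : ℝ) / 2 = (k : ℝ) / 2 + 1 by push_cast; ring,
      show (k : ℝ) / 2 + 1 + 1 = k / 2 + 2 by ring]
    exact expCoshIntegral_sinh_pow_add_two_of_eq hz k _ ih.1 ih.2

theorem hasSum_expCoshIntegral_exp_mul_sinh {z w : ℝ} (hw : |w| < z) :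
    HasSum (fun k : ℕ => w ^ k / k.factorial * expCoshIntegral z (fun u => sinh u ^ k))
      (expCoshIntegral z fun u => exp (w * sinh u)) := by
  have hz : 0 < z := (abs_nonneg w).trans_lt hw
  have hseries : ∀ u x : ℝ,
      HasSum (fun k : ℕ => exp (-z * cosh u) * (x ^ k / k.factorial))
        (exp (-z * cosh u) * exp x) :=
    fun u x => by
      simpa only [exp_eq_exp_ℝ] using (NormedSpace.expSeries_div_hasSum_exp x).mul_left _
  set F : ℕ → ℝ → ℝ := fun k u => exp (-z * cosh u) * ((w * sinh u) ^ k / k.factorial)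
  have hF : ∀ k : ℕ, ∫ u in Ioi 0, F k u
      = w ^ k / k.factorial * expCoshIntegral z (fun u => sinh u ^ k) := by
    intro k
    rw [expCoshIntegral, ← integral_const_mul]
    congr 1 with u
    simp only [F, mul_pow]
    ring
  have hnorm : ∀ k u, ‖F k u‖ = exp (-z * cosh u) * (|w * sinh u| ^ k / k.factorial) := by
    intro k u
    simp [F, abs_mul]
  -- the series of norms sums to `exp (-z cosh u + |w sinh u|) ≤ exp (-(z - |w|) cosh u)`
  have hdom : IntegrableOn (fun u => exp (-z * cosh u) * exp |w * sinh u|) (Ioi 0) := by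
    refine ((isExpBounded_const 1).integrableOn_exp_neg_mul_cosh_mul (sub_pos.2 hw) 0).mono'
      (by fun_prop : Continuous _).aestronglyMeasurable (ae_of_all _ fun u => ?_)
    rw [norm_of_nonneg (by positivity), ← exp_add, mul_one, exp_le_exp, abs_mul]
    nlinarith [abs_sinh_le_cosh u, abs_nonneg w]
  simp only [← hF]
  refine hasSum_integral_of_dominated_convergence (fun k u => ‖F k u‖)
    (fun k => (by fun_prop : Continuous (F k)).aestronglyMeasurable)
    (fun k => ae_of_all _ fun u => le_rfl)
    (ae_of_all _ fun u => ?_) ?_ (ae_of_all _ fun u => ?_)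
  · simpa only [hnorm] using (hseries u _).summable
  · simp only [hnorm, (hseries _ _).tsum_eq]
    exact hdom
  · simpa only [F] using hseries u (w * sinh u)

lemma integral_Ioi_eq_integral_comp_mul_cosh {b : ℝ} (hb : 0 < b) (g : ℝ → ℝ) :
    ∫ τ in Ioi b, g τ = ∫ u in Ioi 0, b * sinh u * g (b * cosh u) := by
  have himage : (fun u => b * cosh u) '' Ioi 0 = Ioi b := by
    ext τ
    refine ⟨fun ⟨u, hu, hτ⟩ => hτ ▸ ?_, fun hτ => ?_⟩
    · exact lt_mul_of_one_lt_right hb (one_lt_cosh.2 hu.ne')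
    · have h1 : 1 < τ / b := (one_lt_div hb).2 hτ
      refine ⟨arcosh (τ / b), arcosh_pos h1, ?_⟩
      simp only [cosh_arcosh h1.le, mul_div_cancel₀ _ hb.ne']
  have hinj : InjOn (fun u => b * cosh u) (Ioi 0) := fun u hu v hv huv =>
    cosh_strictMonoOn.injOn (Ioi_subset_Ici_self hu) (Ioi_subset_Ici_self hv)
      (mul_left_cancel₀ hb.ne' huv)
  rw [← himage, integral_image_eq_integral_abs_deriv_smul measurableSet_Ioi
    (fun u _ => ((hasDerivAt_cosh u).const_mul b).hasDerivWithinAt) hinj]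
  refine setIntegral_congr_fun measurableSet_Ioi fun u hu => ?_
  rw [abs_of_pos (mul_pos hb (sinh_pos_iff.2 hu)), smul_eq_mul]

theorem integral_Ioi_exp_mul_exp_sqrt_div_sqrt {r c : ℝ} (hr : 0 < r) (hc : 0 < c) (a l : ℝ) :
    ∫ τ in Ioi (r / c),
        exp (-a * τ) * (exp (l / c * √(c ^ 2 * τ ^ 2 - r ^ 2)) / √(c ^ 2 * τ ^ 2 - r ^ 2))
      = 1 / c * expCoshIntegral (a * r / c) fun u => exp (l * r / c * sinh u) := by
  rw [integral_Ioi_eq_integral_comp_mul_cosh (div_pos hr hc), expCoshIntegral,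
    ← integral_const_mul]
  refine setIntegral_congr_fun measurableSet_Ioi fun u hu => ?_
  have hsinh : 0 < sinh u := sinh_pos_iff.2 hu
  have hsqrt : √(c ^ 2 * (r / c * cosh u) ^ 2 - r ^ 2) = r * sinh u := by
    rw [← sqrt_sq (by positivity : 0 ≤ r * sinh u)]
    congr 1
    field_simp
    linear_combination cosh_sq u
  rw [hsqrt]
  field_simp

lemma pow_mul_rpow_half {s t : ℝ} (hs : 0 ≤ s) (ht : 0 ≤ t) (k : ℕ) :
    s ^ k * t ^ ((k : ℝ) / 2) = (s ^ 2 * t) ^ ((k : ℝ) / 2) := by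
  rw [mul_rpow (by positivity) ht, ← rpow_natCast_mul hs, Nat.cast_ofNat,
    mul_div_cancel₀ _ two_ne_zero, rpow_natCast]

theorem stmt4 (lam mu c : ℝ) (hlam : 0 < lam) (hmu : 0 < mu) (hc : 0 < c)
    (x : EuclideanSpace ℝ (Fin 2)) (hx : 0 < ‖x‖) :
    (lam * mu / (2 * π * c)) *
        ∫ τ in Ioi (‖x‖ / c),
          Real.exp (-(lam + mu) * τ) *
            (Real.exp ((lam / c) * Real.sqrt (c ^ 2 * τ ^ 2 - ‖x‖ ^ 2)) /
              Real.sqrt (c ^ 2 * τ ^ 2 - ‖x‖ ^ 2))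
      = (lam * mu / (2 * π ^ ((3 : ℝ) / 2) * c ^ 2)) *
          ∑' k : ℕ, (lam ^ k / (Nat.factorial k : ℝ)) * Real.Gamma (((k : ℝ) + 1) / 2)
            * (2 * ‖x‖ / (c * (lam + mu))) ^ ((k : ℝ) / 2)
            * besselK ((k : ℝ) / 2) ((lam + mu) * ‖x‖ / c) := by
  set r := ‖x‖
  have hz : 0 < (lam + mu) * r / c := by positivity
  have hw : |lam * r / c| < (lam + mu) * r / c := by
    rw [abs_of_pos (by positivity)]
    gcongr
    linarith
  have hπ : π ^ ((3 : ℝ) / 2) = π * √π := by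
    rw [show (3 : ℝ) / 2 = 1 + 1 / 2 by norm_num, rpow_add pi_pos, rpow_one, sqrt_eq_rpow]
  rw [integral_Ioi_exp_mul_exp_sqrt_div_sqrt hx hc,
    ← (hasSum_expCoshIntegral_exp_mul_sinh hw).tsum_eq,
    ← tsum_mul_left, ← tsum_mul_left, ← tsum_mul_left]
  refine tsum_congr fun k => ?_
  have hscale : (lam * r / c) ^ k * (2 / ((lam + mu) * r / c)) ^ ((k : ℝ) / 2)
      = lam ^ k * (2 * r / (c * (lam + mu))) ^ ((k : ℝ) / 2) := by
    rw [mul_div_assoc, mul_pow, mul_assoc, pow_mul_rpow_half (by positivity) (by positivity),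
      show (r / c) ^ 2 * (2 / ((lam + mu) * r / c)) = 2 * r / (c * (lam + mu)) by field_simp]
  rw [(expCoshIntegral_sinh_pow hz k).1, hπ]
  linear_combination
    lam * mu / (2 * π * c) / c / k.factorial * Gamma ((k + 1) / 2) / √π
      * besselK (k / 2) ((lam + mu) * r / c) * hscale
end

section
/- Let λ > 0, μ > 0, c > 0, and define p_h(x) = (λμ/(2πc)) ∫_{‖x‖/c}^∞ e^{-(λ+μ)τ} exp((λ/c)√(c²τ² - ‖x‖²)) / √(c²τ² - ‖x‖²) dτ for x ∈ ℝ². Then ∫_{ℝ²} p_h(x) dx = λ/(λ+μ). -/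
/-!
In polar coordinates the integral becomes `λμ/c · ∫₀^∞ r ∫_{r/c}^∞ k(r, τ) dτ dr`, where
`k = flightKernel`. Exchanging the order of integration over the wedge `0 < r < cτ` and
substituting `u = √(c²τ² - r²)`, for which `r dr / √(c²τ² - r²) = -du`, removes the singularity:
the inner integral becomes `e^{-(λ+μ)τ} ∫₀^{cτ} e^{λu/c} du = (c/λ)(e^{-μτ} - e^{-(λ+μ)τ})`,
whose integral over `τ > 0` is `c/λ · (1/μ - 1/(λ+μ)) = c/(μ(λ+μ))`.
-/

open MeasureTheory Real Set

theorem integral_fun_norm_euclideanSpace_two {F : Type*} [NormedAddCommGroup F]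
    [NormedSpace ℝ F] (f : ℝ → F) :
    ∫ x : EuclideanSpace ℝ (Fin 2), f ‖x‖ = (2 * π) • ∫ r in Ioi (0 : ℝ), r • f r := by
  have hball : volume.real (Metric.ball (0 : EuclideanSpace ℝ (Fin 2)) 1) = π := by
    simp [measureReal_def, EuclideanSpace.volume_ball, Real.sq_sqrt pi_nonneg, one_add_one_eq_two,
      pi_nonneg]
  rw [integral_fun_norm_addHaar volume f, hball, finrank_euclideanSpace_fin,
    ← Nat.cast_smul_eq_nsmul ℝ, smul_smul]
  norm_num

section SqrtSubstitution

variable {E : Type*} [NormedAddCommGroup E] [NormedSpace ℝ E] {b : ℝ}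

lemma sqrt_sq_sub_sq_mem_Ioo {u : ℝ} (hu : u ∈ Ioo 0 b) : √(b ^ 2 - u ^ 2) ∈ Ioo 0 b := by
  obtain ⟨hu₀, hub⟩ := hu
  exact ⟨sqrt_pos.2 (by nlinarith), (sqrt_lt' (hu₀.trans hub)).2 (by nlinarith)⟩

lemma sqrt_sq_sub_sq_sqrt_sq_sub_sq {u : ℝ} (hu : u ∈ Ioo 0 b) :
    √(b ^ 2 - √(b ^ 2 - u ^ 2) ^ 2) = u := by
  obtain ⟨hu₀, hub⟩ := hu
  rw [sq_sqrt (by nlinarith), sub_sub_cancel, sqrt_sq hu₀.le]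

lemma bijOn_sqrt_sq_sub_sq : BijOn (fun u ↦ √(b ^ 2 - u ^ 2)) (Ioo 0 b) (Ioo 0 b) :=
  have hinv : LeftInvOn (fun u ↦ √(b ^ 2 - u ^ 2)) (fun u ↦ √(b ^ 2 - u ^ 2)) (Ioo 0 b) :=
    fun _ hu ↦ sqrt_sq_sub_sq_sqrt_sq_sub_sq hu
  InvOn.bijOn ⟨hinv, hinv⟩ (fun _ ↦ sqrt_sq_sub_sq_mem_Ioo) (fun _ ↦ sqrt_sq_sub_sq_mem_Ioo)

lemma hasDerivAt_sqrt_sq_sub_sq {u : ℝ} (hu : u ∈ Ioo 0 b) :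
    HasDerivAt (fun u ↦ √(b ^ 2 - u ^ 2)) (-u / √(b ^ 2 - u ^ 2)) u := by
  have hpos : 0 < b ^ 2 - u ^ 2 := by nlinarith [hu.1, hu.2]
  convert ((hasDerivAt_pow 2 u).const_sub (b ^ 2)).sqrt hpos.ne' using 1
  field_simp
  ring

lemma abs_deriv_smul_sqrt_sq_sub_sq (g : ℝ → E) {u : ℝ} (hu : u ∈ Ioo 0 b) :
    |-u / √(b ^ 2 - u ^ 2)| •
      ((√(b ^ 2 - u ^ 2) / √(b ^ 2 - √(b ^ 2 - u ^ 2) ^ 2)) •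
        g √(b ^ 2 - √(b ^ 2 - u ^ 2) ^ 2)) = g u := by
  have hs : 0 < √(b ^ 2 - u ^ 2) := (sqrt_sq_sub_sq_mem_Ioo hu).1
  rw [sqrt_sq_sub_sq_sqrt_sq_sub_sq hu, smul_smul, abs_div, abs_neg, abs_of_pos hu.1,
    abs_of_pos hs, div_mul_div_comm, mul_comm, div_self (mul_pos hs hu.1).ne', one_smul]

lemma integrableOn_Ioo_div_sqrt_sq_sub_sq_smul_iff (g : ℝ → E) :
    IntegrableOn (fun r ↦ (r / √(b ^ 2 - r ^ 2)) • g √(b ^ 2 - r ^ 2)) (Ioo 0 b) ↔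
      IntegrableOn g (Ioo 0 b) := by
  have h := integrableOn_image_iff_integrableOn_abs_deriv_smul measurableSet_Ioo
    (fun u hu ↦ (hasDerivAt_sqrt_sq_sub_sq hu).hasDerivWithinAt)
    (bijOn_sqrt_sq_sub_sq (b := b)).injOn
    (fun r ↦ (r / √(b ^ 2 - r ^ 2)) • g √(b ^ 2 - r ^ 2))
  rw [bijOn_sqrt_sq_sub_sq.image_eq] at h
  exact h.trans <| integrableOn_congr_fun (fun u hu ↦ abs_deriv_smul_sqrt_sq_sub_sq g hu) measurableSet_Ioo

lemma integral_Ioo_div_sqrt_sq_sub_sq_smul (g : ℝ → E) :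
    ∫ r in Ioo 0 b, (r / √(b ^ 2 - r ^ 2)) • g √(b ^ 2 - r ^ 2) = ∫ u in Ioo 0 b, g u := by
  have h := integral_image_eq_integral_abs_deriv_smul measurableSet_Ioo
    (fun u hu ↦ (hasDerivAt_sqrt_sq_sub_sq hu).hasDerivWithinAt)
    (bijOn_sqrt_sq_sub_sq (b := b)).injOn
    (fun r ↦ (r / √(b ^ 2 - r ^ 2)) • g √(b ^ 2 - r ^ 2))
  rw [bijOn_sqrt_sq_sub_sq.image_eq] at h
  exact h.trans <| setIntegral_congr_fun measurableSet_Ioo (fun u hu ↦ abs_deriv_smul_sqrt_sq_sub_sq g hu)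

end SqrtSubstitution

theorem integral_Ioi_integral_Ioi_div_eq_integral_Ioi_integral_Ioo {f : ℝ → ℝ → ℝ} {c : ℝ}
    (hc : 0 < c) (hf : Measurable (Function.uncurry f))
    (hf₀ : ∀ τ, ∀ r ∈ Ioo 0 (c * τ), 0 ≤ f r τ)
    (hfr : ∀ τ, IntegrableOn (f · τ) (Ioo 0 (c * τ)))
    (hfτ : IntegrableOn (fun τ ↦ ∫ r in Ioo 0 (c * τ), f r τ) (Ioi 0)) :
    ∫ r in Ioi 0, ∫ τ in Ioi (r / c), f r τ = ∫ τ in Ioi 0, ∫ r in Ioo 0 (c * τ), f r τ := by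
  set F : ℝ → ℝ → ℝ := fun r τ ↦ (Ioo 0 (c * τ)).indicator (f · τ) r
  have hF_meas : Measurable (Function.uncurry F) := by
    have hW : MeasurableSet {p : ℝ × ℝ | 0 < p.1 ∧ p.1 < c * p.2} :=
      (measurableSet_lt measurable_const measurable_fst).inter
        (measurableSet_lt measurable_fst (measurable_snd.const_mul c))
    exact hf.indicator hW
  have hF_r : ∀ r, ∫ τ, F r τ = (Ioi 0).indicator (fun r ↦ ∫ τ in Ioi (r / c), f r τ) r := by
    intro r
    by_cases hr : r ∈ Ioi (0 : ℝ)
    · rw [indicator_of_mem hr, ← integral_indicator measurableSet_Ioi]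
      congr 1 with τ
      simp only [F, indicator_apply, mem_Ioo, mem_Ioi, div_lt_iff₀ hc, mul_comm τ, mem_Ioi.1 hr,
        true_and]
    · rw [indicator_of_notMem hr]
      simp [F, indicator_apply, mem_Ioi.not.1 hr]
  have hF_τ : ∀ τ, ∫ r, F r τ = ∫ r in Ioo 0 (c * τ), f r τ := fun τ ↦
    integral_indicator measurableSet_Ioo
  have hvanish : ∀ τ ∉ Ioi (0 : ℝ), ∫ r in Ioo 0 (c * τ), f r τ = 0 := fun τ hτ ↦ by
    rw [Ioo_eq_empty (by nlinarith [mem_Ioi.not.1 hτ]), Measure.restrict_empty, integral_zero_measure]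
  have hF : Integrable (Function.uncurry F) (volume.prod volume) := by
    refine (integrable_prod_iff' hF_meas.aestronglyMeasurable).2 ⟨ae_of_all _ fun τ ↦ ?_, ?_⟩
    · exact (integrable_indicator_iff measurableSet_Ioo).2 (hfr τ)
    · have hnorm : ∀ r τ, ‖F r τ‖ = F r τ := fun r τ ↦
        norm_of_nonneg (indicator_nonneg (hf₀ τ) r)
      simp_rw [Function.uncurry_apply_pair, hnorm, hF_τ]
      exact (integrableOn_iff_integrable_of_support_subset
        fun τ hτ ↦ by_contra fun h ↦ hτ (hvanish τ h)).1 hfτ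
  calc ∫ r in Ioi 0, ∫ τ in Ioi (r / c), f r τ = ∫ r, ∫ τ, F r τ := by
        simp_rw [hF_r, integral_indicator measurableSet_Ioi]
    _ = ∫ τ, ∫ r, F r τ := integral_integral_swap hF
    _ = ∫ τ in Ioi 0, ∫ r in Ioo 0 (c * τ), f r τ := by
        simp_rw [hF_τ]
        exact (setIntegral_eq_integral_of_forall_compl_eq_zero hvanish).symm

lemma integral_Ioo_exp_mul {k b : ℝ} (hk : k ≠ 0) (hb : 0 ≤ b) :
    ∫ u in Ioo 0 b, exp (k * u) = (exp (k * b) - 1) / k := by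
  rw [← integral_Ioc_eq_integral_Ioo, ← intervalIntegral.integral_of_le hb,
    intervalIntegral.integral_comp_mul_left (fun u ↦ exp u) hk, integral_exp, mul_zero, exp_zero,
    smul_eq_mul, inv_mul_eq_div]

lemma integral_Ioi_exp_neg_mul_sub_exp_neg_mul {mu nu : ℝ} (hmu : 0 < mu) (hnu : 0 < nu) :
    ∫ τ in Ioi 0, (exp (-mu * τ) - exp (-nu * τ)) = 1 / mu - 1 / nu := by
  rw [integral_sub (exp_neg_integrableOn_Ioi 0 hmu) (exp_neg_integrableOn_Ioi 0 hnu),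
    integral_exp_mul_Ioi (neg_lt_zero.2 hmu), integral_exp_mul_Ioi (neg_lt_zero.2 hnu)]
  simp only [mul_zero, exp_zero, div_neg, one_div]
  ring

noncomputable def flightKernel (lam mu c r τ : ℝ) : ℝ :=
  exp (-(lam + mu) * τ) * (exp (lam / c * √(c ^ 2 * τ ^ 2 - r ^ 2)) / √(c ^ 2 * τ ^ 2 - r ^ 2))

lemma measurable_mul_flightKernel (lam mu c : ℝ) :
    Measurable (Function.uncurry fun r τ ↦ r * flightKernel lam mu c r τ) := by
  unfold flightKernel
  fun_prop

lemma mul_flightKernel_nonneg (lam mu c : ℝ) {r : ℝ} (hr : 0 ≤ r) (τ : ℝ) :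
    0 ≤ r * flightKernel lam mu c r τ := by
  unfold flightKernel
  positivity

lemma mul_flightKernel_eq (lam mu c r τ : ℝ) :
    r * flightKernel lam mu c r τ = (r / √((c * τ) ^ 2 - r ^ 2)) •
      (exp (-(lam + mu) * τ) * exp (lam / c * √((c * τ) ^ 2 - r ^ 2))) := by
  rw [flightKernel, mul_pow, smul_eq_mul]
  ring

lemma integrableOn_mul_flightKernel (lam mu c τ : ℝ) :
    IntegrableOn (fun r ↦ r * flightKernel lam mu c r τ) (Ioo 0 (c * τ)) := by
  simp_rw [mul_flightKernel_eq]
  exact (integrableOn_Ioo_div_sqrt_sq_sub_sq_smul_iff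
    fun u ↦ exp (-(lam + mu) * τ) * exp (lam / c * u)).2
    ((Continuous.integrableOn_Icc (by fun_prop)).mono_set Ioo_subset_Icc_self)

lemma integral_Ioo_mul_flightKernel {lam mu c τ : ℝ} (hlam : 0 < lam) (hc : 0 < c) (hτ : 0 ≤ τ) :
    ∫ r in Ioo 0 (c * τ), r * flightKernel lam mu c r τ =
      c / lam * (exp (-mu * τ) - exp (-(lam + mu) * τ)) := by
  simp_rw [mul_flightKernel_eq]
  rw [integral_Ioo_div_sqrt_sq_sub_sq_smul (fun u ↦ exp (-(lam + mu) * τ) * exp (lam / c * u)),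
    integral_const_mul, integral_Ioo_exp_mul (by positivity) (by positivity),
    show lam / c * (c * τ) = lam * τ by field_simp,
    show -mu * τ = -(lam + mu) * τ + lam * τ by ring, exp_add]
  field_simp

lemma integrableOn_integral_Ioo_mul_flightKernel {lam mu c : ℝ}
    (hlam : 0 < lam) (hmu : 0 < mu) (hc : 0 < c) :
    IntegrableOn (fun τ ↦ ∫ r in Ioo 0 (c * τ), r * flightKernel lam mu c r τ) (Ioi 0) := by
  refine IntegrableOn.congr_fun ?_
    (fun τ hτ ↦ (integral_Ioo_mul_flightKernel hlam hc (le_of_lt hτ)).symm) measurableSet_Ioi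
  exact ((exp_neg_integrableOn_Ioi 0 hmu).sub
    (exp_neg_integrableOn_Ioi 0 (by positivity))).const_mul _

lemma integral_Ioi_integral_Ioo_mul_flightKernel {lam mu c : ℝ}
    (hlam : 0 < lam) (hmu : 0 < mu) (hc : 0 < c) :
    ∫ τ in Ioi 0, ∫ r in Ioo 0 (c * τ), r * flightKernel lam mu c r τ = c / (mu * (lam + mu)) := by
  rw [setIntegral_congr_fun measurableSet_Ioi
      (fun τ hτ ↦ integral_Ioo_mul_flightKernel hlam hc (le_of_lt hτ)),
    integral_const_mul, integral_Ioi_exp_neg_mul_sub_exp_neg_mul hmu (by positivity)]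
  field_simp
  ring

lemma integral_Ioi_mul_integral_Ioi_flightKernel {lam mu c : ℝ}
    (hlam : 0 < lam) (hmu : 0 < mu) (hc : 0 < c) :
    ∫ r in Ioi 0, r * ∫ τ in Ioi (r / c), flightKernel lam mu c r τ = c / (mu * (lam + mu)) := by
  simp_rw [← integral_const_mul]
  rw [integral_Ioi_integral_Ioi_div_eq_integral_Ioi_integral_Ioo hc
      (measurable_mul_flightKernel lam mu c)
      (fun τ r hr ↦ mul_flightKernel_nonneg lam mu c hr.1.le τ)
      (integrableOn_mul_flightKernel lam mu c)
      (integrableOn_integral_Ioo_mul_flightKernel hlam hmu hc),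
    integral_Ioi_integral_Ioo_mul_flightKernel hlam hmu hc]

theorem stmt5 (lam mu c : ℝ) (hlam : 0 < lam) (hmu : 0 < mu) (hc : 0 < c) :
    ∫ x : EuclideanSpace ℝ (Fin 2),
        (lam * mu / (2 * π * c)) *
          ∫ τ in Ioi (‖x‖ / c),
            Real.exp (-(lam + mu) * τ) *
              (Real.exp ((lam / c) * Real.sqrt (c ^ 2 * τ ^ 2 - ‖x‖ ^ 2)) /
                Real.sqrt (c ^ 2 * τ ^ 2 - ‖x‖ ^ 2))
      = lam / (lam + mu) := by
  calc _ = (2 * π) • ∫ r in Ioi 0, r • (lam * mu / (2 * π * c) *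
          ∫ τ in Ioi (r / c), flightKernel lam mu c r τ) :=
        integral_fun_norm_euclideanSpace_two _
    _ = 2 * π * (lam * mu / (2 * π * c)) *
          ∫ r in Ioi 0, r * ∫ τ in Ioi (r / c), flightKernel lam mu c r τ := by
        simp_rw [smul_eq_mul, mul_left_comm _ (lam * mu / (2 * π * c)), integral_const_mul,
          mul_assoc]
    _ = lam / (lam + mu) := by
        rw [integral_Ioi_mul_integral_Ioi_flightKernel hlam hmu hc]
        field_simp
end

section
/- Let λ > 0, μ > 0, c > 0. The function r ↦ (λμ/(2πc)) ∫_{r/c}^∞ e^{-(λ+μ)τ} exp((λ/c)√(c²τ² - r²)) / √(c²τ² - r²) dτ is strictly decreasing on (0, ∞). -/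
open MeasureTheory Real Set

private lemma shift_Ioi (f : ℝ → ℝ) (a : ℝ) :
    ∫ τ in Ioi a, f τ = ∫ s in Ioi 0, f (s + a) := by
  have h := (measurePreserving_add_right volume a).setIntegral_preimage_emb
    (measurableEmbedding_addRight a) f (Ioi a)
  rw [← h]
  congr 1
  ext x; simp [mem_Ioi]

private lemma base_integrable {mu : ℝ} (hmu : 0 < mu) :
    IntegrableOn (fun s : ℝ => Real.exp (-(mu*s)) * s ^ (-(1:ℝ)/2)) (Ioi 0) := by
  have h := Real.GammaIntegral_convergent (by norm_num : (0:ℝ) < 1/2)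
  have h2 := (integrableOn_Ioi_comp_mul_left_iff
    (fun x : ℝ => Real.exp (-x) * x ^ ((1:ℝ)/2 - 1)) 0 hmu).mpr (by simpa using h)
  have h3 := h2.smul (mu ^ (-(1:ℝ)/2))⁻¹
  refine (integrableOn_congr_fun (fun x hx => ?_) measurableSet_Ioi).mp h3
  simp only [Pi.smul_apply, smul_eq_mul, mem_Ioi] at *; symm
  rw [Real.mul_rpow hmu.le hx.le]
  have : mu ^ ((1:ℝ)/2 - 1) ≠ 0 := by positivity
  rw [show (1:ℝ)/2 - 1 = -(1)/2 by norm_num]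
  field_simp

private lemma W_eq {c : ℝ} (hc : c ≠ 0) (r s : ℝ) :
    c ^ 2 * (s + r / c) ^ 2 - r ^ 2 = c^2*s^2 + 2*c*s*r := by
  field_simp; ring

private lemma rpow_half_inv {s : ℝ} (hs : 0 < s) : s ^ (-(1:ℝ)/2) = (Real.sqrt s)⁻¹ := by
  rw [show (-(1:ℝ)/2) = -(1/2) by norm_num, Real.rpow_neg hs.le, ← Real.sqrt_eq_rpow]

private noncomputable def gfun (lam mu c r s : ℝ) : ℝ :=
  Real.exp (-(lam + mu) * (s + r/c)) *
    (Real.exp ((lam / c) * Real.sqrt (c ^ 2 * (s + r/c) ^ 2 - r ^ 2)) /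
      Real.sqrt (c ^ 2 * (s + r/c) ^ 2 - r ^ 2))

private lemma g_integrable {lam mu c r : ℝ} (hlam : 0 < lam) (hmu : 0 < mu)
    (hc : 0 < c) (hr : 0 < r) :
    IntegrableOn (fun s => gfun lam mu c r s) (Ioi 0) := by
  unfold gfun
  have hWc : Continuous fun s : ℝ => Real.sqrt (c ^ 2 * (s + r/c) ^ 2 - r ^ 2) :=
    Real.continuous_sqrt.comp (by fun_prop)
  have hWpos : ∀ s ∈ Ioi (0:ℝ), 0 < c ^ 2 * (s + r/c) ^ 2 - r ^ 2 := by
    intro s hs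
    have hs' : (0:ℝ) < s := hs
    rw [W_eq hc.ne' r s]; positivity
  have hmeas : AEStronglyMeasurable (fun s : ℝ =>
      Real.exp (-(lam + mu) * (s + r/c)) *
        (Real.exp ((lam / c) * Real.sqrt (c ^ 2 * (s + r/c) ^ 2 - r ^ 2)) /
          Real.sqrt (c ^ 2 * (s + r/c) ^ 2 - r ^ 2)))
      (volume.restrict (Ioi 0)) := by
    apply ContinuousOn.aestronglyMeasurable _ measurableSet_Ioi
    apply ContinuousOn.mul (by fun_prop)
    apply ContinuousOn.div (by fun_prop) hWc.continuousOn
    intro s hs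
    exact (Real.sqrt_pos.mpr (hWpos s hs)).ne'
  set K : ℝ := Real.exp (-(mu * (r/c))) / Real.sqrt (2*c*r) with hK
  have hsqcr : (0:ℝ) < Real.sqrt (2*c*r) := Real.sqrt_pos.mpr (by positivity)
  have hKpos : 0 < K := by rw [hK]; positivity
  have hbase := ((base_integrable hmu).const_mul K)
  refine Integrable.mono' hbase hmeas ?_
  rw [ae_restrict_iff' measurableSet_Ioi]
  filter_upwards with s
  intro hs
  have hs' : (0:ℝ) < s := hs
  have hW : c ^ 2 * (s + r/c) ^ 2 - r ^ 2 = c^2*s^2 + 2*c*s*r := W_eq hc.ne' r s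
  have hWp : 0 < c ^ 2 * (s + r/c) ^ 2 - r ^ 2 := hWpos s hs
  have hsq : 0 < Real.sqrt (c ^ 2 * (s + r/c) ^ 2 - r ^ 2) := Real.sqrt_pos.mpr hWp
  have hval : 0 ≤ Real.exp (-(lam + mu) * (s + r/c)) *
      (Real.exp ((lam / c) * Real.sqrt (c ^ 2 * (s + r/c) ^ 2 - r ^ 2)) /
        Real.sqrt (c ^ 2 * (s + r/c) ^ 2 - r ^ 2)) := by positivity
  rw [Real.norm_eq_abs, abs_of_nonneg hval]
  have hub : Real.sqrt (c ^ 2 * (s + r/c) ^ 2 - r ^ 2) ≤ c*s + r := by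
    rw [show c*s + r = Real.sqrt ((c*s+r)^2) by rw [Real.sqrt_sq (by positivity)]]
    apply Real.sqrt_le_sqrt; rw [hW]; nlinarith
  have hlb : Real.sqrt (2*c*r) * Real.sqrt s ≤
      Real.sqrt (c ^ 2 * (s + r/c) ^ 2 - r ^ 2) := by
    rw [← Real.sqrt_mul (by positivity)]
    apply Real.sqrt_le_sqrt; rw [hW]; nlinarith
  have hexp : Real.exp ((lam / c) * Real.sqrt (c ^ 2 * (s + r/c) ^ 2 - r ^ 2)) ≤
      Real.exp (lam * s + lam * (r/c)) := by
    apply Real.exp_le_exp.mpr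
    have heq : (lam/c) * (c*s + r) = lam * s + lam * (r/c) := by field_simp
    nlinarith [mul_le_mul_of_nonneg_left hub (le_of_lt (by positivity : (0:ℝ) < lam/c))]
  have hsqs : (0:ℝ) < Real.sqrt s := Real.sqrt_pos.mpr hs'
  have hlbpos : 0 < Real.sqrt (2*c*r) * Real.sqrt s := by positivity
  have step : Real.exp (-(lam + mu) * (s + r/c)) *
      (Real.exp ((lam / c) * Real.sqrt (c ^ 2 * (s + r/c) ^ 2 - r ^ 2)) /
        Real.sqrt (c ^ 2 * (s + r/c) ^ 2 - r ^ 2)) ≤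
      Real.exp (-(lam + mu) * (s + r/c)) *
      (Real.exp (lam * s + lam * (r/c)) / (Real.sqrt (2*c*r) * Real.sqrt s)) := by
    apply mul_le_mul_of_nonneg_left _ (Real.exp_nonneg _)
    exact div_le_div₀ (Real.exp_nonneg _) hexp hlbpos hlb
  have hfinal : Real.exp (-(lam + mu) * (s + r/c)) *
      (Real.exp (lam * s + lam * (r/c)) / (Real.sqrt (2*c*r) * Real.sqrt s)) =
      K * (Real.exp (-(mu*s)) * s ^ (-(1:ℝ)/2)) := by
    rw [hK, rpow_half_inv hs', ← mul_div_assoc, ← Real.exp_add,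
      show (-(lam + mu) * (s + r/c) + (lam * s + lam * (r/c))) = -(mu*s) + -(mu*(r/c)) by ring,
      Real.exp_add]
    field_simp
  linarith

set_option maxHeartbeats 1000000 in
private lemma g_strict {lam mu c r1 r2 s : ℝ} (hlam : 0 < lam) (hmu : 0 < mu)
    (hc : 0 < c) (hr1 : 0 < r1) (h12 : r1 < r2) (hs : 0 < s) :
    gfun lam mu c r2 s < gfun lam mu c r1 s := by
  unfold gfun
  have hr2 : 0 < r2 := hr1.trans h12
  have hW1 : c ^ 2 * (s + r1/c) ^ 2 - r1 ^ 2 = c^2*s^2 + 2*c*s*r1 := W_eq hc.ne' r1 s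
  have hW2 : c ^ 2 * (s + r2/c) ^ 2 - r2 ^ 2 = c^2*s^2 + 2*c*s*r2 := W_eq hc.ne' r2 s
  rw [hW1, hW2]
  have hW1p : (0:ℝ) < c^2*s^2 + 2*c*s*r1 := by positivity
  have hW2p : (0:ℝ) < c^2*s^2 + 2*c*s*r2 := by positivity
  set u1 := Real.sqrt (c^2*s^2 + 2*c*s*r1) with hu1
  set u2 := Real.sqrt (c^2*s^2 + 2*c*s*r2) with hu2
  have hu1p : 0 < u1 := Real.sqrt_pos.mpr hW1p
  have hu2p : 0 < u2 := Real.sqrt_pos.mpr hW2p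
  have hu1sq : u1 ^ 2 = c^2*s^2 + 2*c*s*r1 := Real.sq_sqrt hW1p.le
  have hu2sq : u2 ^ 2 = c^2*s^2 + 2*c*s*r2 := Real.sq_sqrt hW2p.le
  have hlt : u1 < u2 := by
    rw [hu1, hu2]
    exact Real.sqrt_lt_sqrt hW1p.le (by nlinarith [mul_pos (mul_pos hc hs) (sub_pos.mpr h12)])
  clear_value u1 u2
  clear hu1 hu2
  have hu1cs : c*s ≤ u1 := by nlinarith
  have hu2cs : c*s ≤ u2 := by nlinarith
  have hdiff : u2 - u1 ≤ r2 - r1 := by nlinarith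
  have hexp : -(lam + mu) * (s + r2/c) + (lam / c) * u2 <
      -(lam + mu) * (s + r1/c) + (lam / c) * u1 := by
    have h1 : (lam / c) * (u2 - u1) ≤ (lam / c) * (r2 - r1) :=
      mul_le_mul_of_nonneg_left hdiff (by positivity)
    have hfrac : lam / c < (lam + mu) / c := by
      rw [div_lt_div_iff₀ hc hc]; nlinarith
    have h2 : (lam / c) * (r2 - r1) < ((lam + mu) / c) * (r2 - r1) :=
      mul_lt_mul_of_pos_right hfrac (by linarith)
    have h1' : (lam/c)*u2 - (lam/c)*u1 ≤ (lam/c)*(r2-r1) := by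
      rw [← mul_sub]; exact h1
    have h3 : (lam + mu) * (s + r2/c) - (lam + mu) * (s + r1/c)
        = ((lam + mu) / c) * (r2 - r1) := by field_simp; ring
    linarith [h1', h2, h3]
  have hE : Real.exp (-(lam + mu) * (s + r2/c)) * Real.exp ((lam / c) * u2) <
      Real.exp (-(lam + mu) * (s + r1/c)) * Real.exp ((lam / c) * u1) := by
    rw [← Real.exp_add, ← Real.exp_add]
    exact Real.exp_lt_exp.mpr hexp
  have hE2p : 0 < Real.exp (-(lam + mu) * (s + r2/c)) * Real.exp ((lam / c) * u2) := by
    positivity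
  have key : Real.exp (-(lam + mu) * (s + r2/c)) * Real.exp ((lam / c) * u2) / u2 <
      Real.exp (-(lam + mu) * (s + r1/c)) * Real.exp ((lam / c) * u1) / u1 := by
    calc Real.exp (-(lam + mu) * (s + r2/c)) * Real.exp ((lam / c) * u2) / u2
        < Real.exp (-(lam + mu) * (s + r2/c)) * Real.exp ((lam / c) * u2) / u1 :=
          div_lt_div_of_pos_left hE2p hu1p hlt
      _ < Real.exp (-(lam + mu) * (s + r1/c)) * Real.exp ((lam / c) * u1) / u1 :=
          div_lt_div_of_pos_right hE hu1p
  calc Real.exp (-(lam + mu) * (s + r2/c)) * (Real.exp ((lam / c) * u2) / u2)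
      = Real.exp (-(lam + mu) * (s + r2/c)) * Real.exp ((lam / c) * u2) / u2 := by ring
    _ < Real.exp (-(lam + mu) * (s + r1/c)) * Real.exp ((lam / c) * u1) / u1 := key
    _ = Real.exp (-(lam + mu) * (s + r1/c)) * (Real.exp ((lam / c) * u1) / u1) := by ring

theorem stmt7 (lam mu c : ℝ) (hlam : 0 < lam) (hmu : 0 < mu) (hc : 0 < c) :
    StrictAntiOn (fun r : ℝ =>
      (lam * mu / (2 * π * c)) *
        ∫ τ in Ioi (r / c),
          Real.exp (-(lam + mu) * τ) *
            (Real.exp ((lam / c) * Real.sqrt (c ^ 2 * τ ^ 2 - r ^ 2)) /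
              Real.sqrt (c ^ 2 * τ ^ 2 - r ^ 2))) (Ioi (0 : ℝ)) := by
  intro r1 hr1 r2 hr2 h12
  simp only [mem_Ioi] at hr1 hr2
  have hπ : (0:ℝ) < π := Real.pi_pos
  have hconst : (0:ℝ) < lam * mu / (2 * π * c) := by positivity
  have hshift : ∀ r : ℝ, (∫ τ in Ioi (r / c),
      Real.exp (-(lam + mu) * τ) *
        (Real.exp ((lam / c) * Real.sqrt (c ^ 2 * τ ^ 2 - r ^ 2)) /
          Real.sqrt (c ^ 2 * τ ^ 2 - r ^ 2))) = ∫ s in Ioi 0, gfun lam mu c r s := by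
    intro r
    rw [shift_Ioi (fun τ => Real.exp (-(lam + mu) * τ) *
      (Real.exp ((lam / c) * Real.sqrt (c ^ 2 * τ ^ 2 - r ^ 2)) /
        Real.sqrt (c ^ 2 * τ ^ 2 - r ^ 2))) (r/c)]
    rfl
  have hint1 : IntegrableOn (fun s => gfun lam mu c r1 s) (Ioi 0) :=
    g_integrable hlam hmu hc hr1
  have hint2 : IntegrableOn (fun s => gfun lam mu c r2 s) (Ioi 0) :=
    g_integrable hlam hmu hc (hr1.trans h12)
  have hmono : ∀ s ∈ Ioi (0:ℝ), gfun lam mu c r2 s < gfun lam mu c r1 s :=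
    fun s hs => g_strict hlam hmu hc hr1 h12 (mem_Ioi.mp hs)
  have hpos : 0 < ∫ s in Ioi 0, (gfun lam mu c r1 s - gfun lam mu c r2 s) := by
    rw [setIntegral_pos_iff_support_of_nonneg_ae]
    · refine lt_of_lt_of_le ?_ (measure_mono (fun x hx =>
        ⟨fun h0 => absurd h0 (sub_ne_zero.mpr (hmono x hx).ne'), hx⟩))
      rw [Real.volume_Ioi]; simp
    · rw [Filter.EventuallyLE, ae_restrict_iff' measurableSet_Ioi]
      refine Filter.Eventually.of_forall fun s hs => ?_
      simp only [Pi.zero_apply]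
      exact sub_nonneg.mpr (hmono s hs).le
    · exact hint1.sub hint2
  rw [integral_sub hint1 hint2] at hpos
  dsimp only
  rw [hshift r1, hshift r2]
  have hI : (∫ s in Ioi 0, gfun lam mu c r2 s) < ∫ s in Ioi 0, gfun lam mu c r1 s := by
    linarith
  exact mul_lt_mul_of_pos_left hI hconst
end

section
/- Let λ > 0, μ > 0, c > 0. Then for every r > 0, 0 < (λμ/(2πc)) ∫_{r/c}^∞ e^{-(λ+μ)τ} exp((λ/c)√(c²τ² - r²)) / √(c²τ² - r²) dτ < ∞; that is, the stationary density of the heavy-particle model is finite and strictly positive at every point away from the source. -/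
open MeasureTheory Real Set

/-!
Write `s = √(c²τ² - r²)` for `τ > r/c`. Since `s ≤ cτ`, the two exponentials together are at
most `e^{-μτ}`, and since `s² ≥ 2rc (τ - r/c)`, the factor `1/s` is at most a multiple of
`(τ - r/c)^{-1/2}`. The integrand is therefore dominated by the translated Gamma integrand
`(τ - r/c)^{-1/2} e^{-μτ}`; being strictly positive on a half-line, its integral is positive.
-/

theorem integrableOn_sub_rpow_mul_exp_neg_mul_Ioi {a s b : ℝ} (hs : -1 < s) (hb : 0 < b) :
    IntegrableOn (fun τ : ℝ => (τ - a) ^ s * exp (-b * τ)) (Ioi a) := by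
  have hshift := ((measurePreserving_sub_right volume a).integrableOn_comp_preimage
    (measurableEmbedding_subRight a)).mpr (integrableOn_rpow_mul_exp_neg_mul_rpow hs one_pos hb)
  rw [preimage_sub_const_Ioi, zero_add] at hshift
  refine IntegrableOn.congr_fun (hshift.const_mul (exp (-b * a))) (fun τ _ => ?_)
    measurableSet_Ioi
  simp only [Function.comp_apply, rpow_one]
  rw [mul_left_comm, ← exp_add]
  ring_nf

theorem setIntegral_pos_of_forall_pos {X : Type*} [MeasurableSpace X] {μ : Measure X} {s : Set X}
    {f : X → ℝ} (hs : MeasurableSet s) (hμs : μ s ≠ 0) (hf : IntegrableOn f s μ)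
    (hpos : ∀ x ∈ s, 0 < f x) : 0 < ∫ x in s, f x ∂μ := by
  rw [setIntegral_pos_iff_support_of_nonneg_ae ((ae_restrict_iff' hs).mpr
    (.of_forall fun x hx => (hpos x hx).le)) hf,
    inter_eq_right.mpr fun x hx => Function.mem_support.mpr (hpos x hx).ne']
  exact pos_iff_ne_zero.mpr hμs

theorem sqrt_sq_mul_sq_sub_sq_le {c τ : ℝ} (r : ℝ) (hc : 0 ≤ c) (hτ : 0 ≤ τ) :
    √(c ^ 2 * τ ^ 2 - r ^ 2) ≤ c * τ :=
  (sqrt_le_left (mul_nonneg hc hτ)).mpr (by nlinarith [sq_nonneg r])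

-- The squared inequality is `0 ≤ (cτ - r)²`.
theorem sqrt_two_mul_mul_sub_le_sqrt_sq_mul_sq_sub_sq {c r : ℝ} (τ : ℝ) (hc : 0 < c) (hr : 0 ≤ r) :
    √(2 * r * c) * √(τ - r / c) ≤ √(c ^ 2 * τ ^ 2 - r ^ 2) := by
  rw [← sqrt_mul (by positivity)]
  refine sqrt_le_sqrt ?_
  have : 2 * r * c * (τ - r / c) = 2 * r * (c * τ) - 2 * r ^ 2 := by field_simp
  nlinarith [sq_nonneg (c * τ - r)]

noncomputable def stationaryIntegrand (lam mu c r τ : ℝ) : ℝ :=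
  exp (-(lam + mu) * τ) * (exp ((lam / c) * √(c ^ 2 * τ ^ 2 - r ^ 2)) / √(c ^ 2 * τ ^ 2 - r ^ 2))

section
variable {lam mu c r τ : ℝ}

theorem sq_mul_sq_sub_sq_pos (hc : 0 < c) (hr : 0 ≤ r) (hτ : r / c < τ) :
    0 < c ^ 2 * τ ^ 2 - r ^ 2 := by
  have : r < c * τ := (div_lt_iff₀' hc).mp hτ
  nlinarith

theorem stationaryIntegrand_pos (hc : 0 < c) (hr : 0 ≤ r) (hτ : r / c < τ) :
    0 < stationaryIntegrand lam mu c r τ :=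
  mul_pos (exp_pos _) (div_pos (exp_pos _) (sqrt_pos.mpr (sq_mul_sq_sub_sq_pos hc hr hτ)))

theorem continuousOn_stationaryIntegrand (hc : 0 < c) (hr : 0 ≤ r) :
    ContinuousOn (stationaryIntegrand lam mu c r) (Ioi (r / c)) := by
  refine ContinuousOn.mul (by fun_prop) (ContinuousOn.div (by fun_prop) (by fun_prop) ?_)
  exact fun τ hτ => (sqrt_pos.mpr (sq_mul_sq_sub_sq_pos hc hr hτ)).ne'

theorem stationaryIntegrand_le (hlam : 0 ≤ lam) (hc : 0 < c) (hr : 0 < r) (hτ : r / c < τ) :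
    stationaryIntegrand lam mu c r τ ≤
      (√(2 * r * c))⁻¹ * ((τ - r / c) ^ (-(1 / 2) : ℝ) * exp (-mu * τ)) := by
  have hτ0 : 0 < τ := (div_pos hr hc).trans hτ
  have hexp : exp (-(lam + mu) * τ) * exp ((lam / c) * √(c ^ 2 * τ ^ 2 - r ^ 2)) ≤
      exp (-mu * τ) := by
    rw [← exp_add, exp_le_exp]
    have := mul_le_mul_of_nonneg_left (sqrt_sq_mul_sq_sub_sq_le r hc.le hτ0.le)
      (div_nonneg hlam hc.le)
    rw [show lam / c * (c * τ) = lam * τ by field_simp] at this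
    linarith
  have hden : 0 < √(2 * r * c) * √(τ - r / c) :=
    mul_pos (sqrt_pos.mpr (by positivity)) (sqrt_pos.mpr (sub_pos.mpr hτ))
  calc stationaryIntegrand lam mu c r τ
      = exp (-(lam + mu) * τ) * exp ((lam / c) * √(c ^ 2 * τ ^ 2 - r ^ 2)) /
          √(c ^ 2 * τ ^ 2 - r ^ 2) := mul_div_assoc _ _ _ |>.symm
    _ ≤ exp (-mu * τ) / (√(2 * r * c) * √(τ - r / c)) :=
      div_le_div₀ (exp_pos _).le hexp hden
        (sqrt_two_mul_mul_sub_le_sqrt_sq_mul_sq_sub_sq τ hc hr.le)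
    _ = (√(2 * r * c))⁻¹ * ((τ - r / c) ^ (-(1 / 2) : ℝ) * exp (-mu * τ)) := by
      rw [rpow_neg (sub_pos.mpr hτ).le, ← sqrt_eq_rpow]
      field_simp

theorem integrableOn_stationaryIntegrand (hlam : 0 ≤ lam) (hmu : 0 < mu) (hc : 0 < c)
    (hr : 0 < r) : IntegrableOn (stationaryIntegrand lam mu c r) (Ioi (r / c)) := by
  refine Integrable.mono'
    ((integrableOn_sub_rpow_mul_exp_neg_mul_Ioi (s := -(1 / 2)) (by norm_num) hmu).const_mul
      (√(2 * r * c))⁻¹)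
    ((continuousOn_stationaryIntegrand hc hr.le).aestronglyMeasurable measurableSet_Ioi) ?_
  refine (ae_restrict_iff' measurableSet_Ioi).mpr (.of_forall fun τ hτ => ?_)
  rw [norm_of_nonneg (stationaryIntegrand_pos hc hr.le hτ).le]
  exact stationaryIntegrand_le hlam hc hr hτ

end

theorem stmt8 (lam mu c : ℝ) (hlam : 0 < lam) (hmu : 0 < mu) (hc : 0 < c) (r : ℝ) (hr : 0 < r) :
    IntegrableOn (fun τ : ℝ =>
        Real.exp (-(lam + mu) * τ) *
          (Real.exp ((lam / c) * Real.sqrt (c ^ 2 * τ ^ 2 - r ^ 2)) /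
            Real.sqrt (c ^ 2 * τ ^ 2 - r ^ 2))) (Ioi (r / c)) ∧
    0 < (lam * mu / (2 * π * c)) *
        ∫ τ in Ioi (r / c),
          Real.exp (-(lam + mu) * τ) *
            (Real.exp ((lam / c) * Real.sqrt (c ^ 2 * τ ^ 2 - r ^ 2)) /
              Real.sqrt (c ^ 2 * τ ^ 2 - r ^ 2)) := by
  have hint := integrableOn_stationaryIntegrand hlam.le hmu hc hr
  refine ⟨hint, mul_pos (by positivity) ?_⟩
  exact setIntegral_pos_of_forall_pos measurableSet_Ioi (by simp) hint
    fun τ hτ => stationaryIntegrand_pos hc hr.le hτ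
end

section
/- For every r > 0 and all λ > 0, μ > 0, c > 0, α > 2, the integral ∫_{r/c}^∞ e^{-(λ+μ)τ} τ^{α-1} exp((λ/c)√(c²τ² - r²)) / √(c²τ² - r²) dτ is finite. -/
/-!
Since `√(c²τ² - r²) ≤ cτ`, the exponent `-(λ + μ)τ + (λ/c)√(c²τ² - r²)` is at most `-μτ`, so the
integrand is dominated by `e^{-μτ} τ^{α-1} / √(c²τ² - r²)`. Near `τ = r/c` the identity
`x² - r² = 2r(x - r) + (x - r)²` at `x = cτ` gives `c²τ² - r² ≥ 2rc(τ - r/c)`, an integrable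
`(τ - r/c)^{-1/2}` singularity; for `τ ≥ 2r/c` the square root is at least `r`, and `e^{-μτ}`
beats every power of `τ`.
-/

open MeasureTheory Real Set Filter

theorem two_mul_mul_sub_le_sq_sub_sq (r x : ℝ) : 2 * r * (x - r) ≤ x ^ 2 - r ^ 2 := by
  nlinarith [sq_nonneg (x - r)]

theorem integrableOn_Ioc_sub_rpow {s : ℝ} (hs : -1 < s) (a b : ℝ) :
    IntegrableOn (fun x => (x - a) ^ s) (Ioc a b) := by
  have h := (intervalIntegral.intervalIntegrable_rpow' hs (a := 0) (b := b - a)).comp_sub_right a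
  rw [zero_add, sub_add_cancel] at h
  exact h.def'.mono_set Ioc_subset_uIoc

theorem continuousOn_exp_neg_mul_mul_rpow (mu s : ℝ) :
    ContinuousOn (fun τ => exp (-mu * τ) * τ ^ s) (Ioi 0) := fun _ hτ =>
  ((continuous_exp.comp (continuous_const.mul continuous_id)).continuousAt.mul
    (continuousAt_rpow_const _ _ (Or.inl (ne_of_gt hτ)))).continuousWithinAt

theorem integrableOn_Ioi_exp_neg_mul_mul_rpow {mu b : ℝ} (hmu : 0 < mu) (hb : 0 < b) (s : ℝ) :
    IntegrableOn (fun τ => exp (-mu * τ) * τ ^ s) (Ioi b) := by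
  refine integrable_of_isBigO_exp_neg (half_pos hmu)
    ((continuousOn_exp_neg_mul_mul_rpow mu s).mono (Ici_subset_Ioi.2 hb)) ?_
  have := ((isLittleO_rpow_exp_pos_mul_atTop s (half_pos hmu)).isBigO).mul
    (Asymptotics.isBigO_refl (fun τ => exp (-mu * τ)) atTop)
  refine (this.congr_left fun τ => mul_comm _ _).congr_right fun τ => ?_
  rw [← exp_add]; ring_nf

theorem exp_neg_add_mul_mul_exp_sqrt_le {lam mu c r τ : ℝ} (hlam : 0 ≤ lam) (hc : 0 < c)
    (hτ : 0 ≤ τ) :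
    exp (-(lam + mu) * τ) * exp (lam / c * √(c ^ 2 * τ ^ 2 - r ^ 2)) ≤ exp (-mu * τ) := by
  have hsqrt : √(c ^ 2 * τ ^ 2 - r ^ 2) ≤ c * τ :=
    sqrt_le_iff.2 ⟨by positivity, by nlinarith [sq_nonneg r]⟩
  have : lam / c * √(c ^ 2 * τ ^ 2 - r ^ 2) ≤ lam * τ := by
    calc lam / c * √(c ^ 2 * τ ^ 2 - r ^ 2) ≤ lam / c * (c * τ) := by gcongr
      _ = lam * τ := by field_simp
  rw [← exp_add]
  exact exp_le_exp.2 (by linarith)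

theorem inv_sqrt_sq_mul_sq_sub_sq_le {r c τ : ℝ} (hr : 0 < r) (hc : 0 < c) (hτ : r / c < τ) :
    (√(c ^ 2 * τ ^ 2 - r ^ 2))⁻¹ ≤ (√(2 * r * c))⁻¹ * (τ - r / c) ^ (-(1 / 2) : ℝ) := by
  have hτ' : 0 < τ - r / c := sub_pos.2 hτ
  have hlower : 2 * r * c * (τ - r / c) ≤ c ^ 2 * τ ^ 2 - r ^ 2 := by
    have := two_mul_mul_sub_le_sq_sub_sq r (c * τ)
    rw [mul_pow] at this
    convert this using 1
    field_simp
  rw [rpow_neg hτ'.le, ← sqrt_eq_rpow, ← mul_inv, ← sqrt_mul (by positivity)]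
  gcongr

theorem integrableOn_Ioc_inv_sqrt_sq_mul_sq_sub_sq {r c : ℝ} (hr : 0 < r) (hc : 0 < c) (b : ℝ) :
    IntegrableOn (fun τ => (√(c ^ 2 * τ ^ 2 - r ^ 2))⁻¹) (Ioc (r / c) b) := by
  have hsing := (integrableOn_Ioc_sub_rpow (s := -(1 / 2)) (by norm_num) (r / c) b).const_mul
    (√(2 * r * c))⁻¹
  refine hsing.mono' (by fun_prop : Measurable _).aestronglyMeasurable ?_
  filter_upwards [ae_restrict_mem measurableSet_Ioc] with τ hτ
  rw [norm_of_nonneg (by positivity)]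
  exact inv_sqrt_sq_mul_sq_sub_sq_le hr hc hτ.1

theorem integrableOn_Ioi_exp_neg_mul_mul_rpow_mul_inv_sqrt {r c mu : ℝ} (hr : 0 < r)
    (hc : 0 < c) (hmu : 0 < mu) (s : ℝ) :
    IntegrableOn (fun τ => exp (-mu * τ) * τ ^ s * (√(c ^ 2 * τ ^ 2 - r ^ 2))⁻¹)
      (Ioi (r / c)) := by
  have ha : 0 < r / c := div_pos hr hc
  rw [← Ioc_union_Ioi_eq_Ioi (by linarith : r / c ≤ 2 * (r / c))]
  refine IntegrableOn.union ?near ?tail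
  case near =>
    refine (integrableOn_Ioc_inv_sqrt_sq_mul_sq_sub_sq hr hc _).continuousOn_mul_of_subset ?_
      isCompact_Icc measurableSet_Ioc Ioc_subset_Icc_self
    exact (continuousOn_exp_neg_mul_mul_rpow mu s).mono fun τ hτ => ha.trans_le hτ.1
  case tail =>
    refine (integrableOn_Ioi_exp_neg_mul_mul_rpow hmu (by positivity) s).mul_bdd
      (by fun_prop : Measurable _).aestronglyMeasurable (c := r⁻¹) ?_
    filter_upwards [ae_restrict_mem measurableSet_Ioi] with τ hτ
    have hrD : r ^ 2 ≤ c ^ 2 * τ ^ 2 - r ^ 2 := by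
      have hcτ : 2 * r < c * τ := by
        rw [mem_Ioi, ← mul_div_assoc, div_lt_iff₀ hc] at hτ; linarith
      nlinarith [two_mul_mul_sub_le_sq_sub_sq r (c * τ)]
    rw [norm_inv, norm_of_nonneg (sqrt_nonneg _)]
    exact inv_anti₀ hr (le_sqrt_of_sq_le hrD)

theorem stmt10_general (r lam mu c α : ℝ) (hr : 0 < r) (hlam : 0 < lam) (hmu : 0 < mu) (hc : 0 < c) :
    IntegrableOn (fun τ : ℝ =>
        Real.exp (-(lam + mu) * τ) * τ ^ (α - 1) *
          (Real.exp ((lam / c) * Real.sqrt (c ^ 2 * τ ^ 2 - r ^ 2)) /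
            Real.sqrt (c ^ 2 * τ ^ 2 - r ^ 2))) (Ioi (r / c)) := by
  refine (integrableOn_Ioi_exp_neg_mul_mul_rpow_mul_inv_sqrt hr hc hmu (α - 1)).mono'
    (by fun_prop : Measurable _).aestronglyMeasurable ?_
  filter_upwards [ae_restrict_mem measurableSet_Ioi] with τ hτ
  have hτ0 : 0 < τ := (div_pos hr hc).trans hτ
  rw [norm_of_nonneg (by positivity)]
  calc _ = exp (-(lam + mu) * τ) * exp (lam / c * √(c ^ 2 * τ ^ 2 - r ^ 2)) * τ ^ (α - 1)
        * (√(c ^ 2 * τ ^ 2 - r ^ 2))⁻¹ := by ring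
    _ ≤ _ := by gcongr; exact exp_neg_add_mul_mul_exp_sqrt_le hlam.le hc hτ0.le

theorem stmt10 (r lam mu c α : ℝ) (hr : 0 < r) (hlam : 0 < lam) (hmu : 0 < mu) (hc : 0 < c)
    (hα : 2 < α) :
    IntegrableOn (fun τ : ℝ =>
        Real.exp (-(lam + mu) * τ) * τ ^ (α - 1) *
          (Real.exp ((lam / c) * Real.sqrt (c ^ 2 * τ ^ 2 - r ^ 2)) /
            Real.sqrt (c ^ 2 * τ ^ 2 - r ^ 2))) (Ioi (r / c)) :=
  stmt10_general r lam mu c α hr hlam hmu hc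
end

section
/- Let c > 0, λ > 0 and μ > 0. The function F(r) = ∫_{r/c}^∞ e^{-(λ+μ)τ} exp((λ/c)√(c²τ² - r²)) / √(c²τ² - r²) dτ, defined for r > 0, tends to 0 as r → ∞, and tends to +∞ as r → 0⁺. -/
open MeasureTheory Real Set Filter

/-!
Since `√(c²τ² - r²) ≤ cτ`, the exponential factors combine to at most `e^{-μτ}`, while
`√(c²τ² - r²) ≥ √r · √(cτ - r)`. After the substitution `u = cτ - r` this gives
`F(r) ≤ C / √r` with `C = c⁻¹ ∫₀^∞ u^{-1/2} e^{-(μ/c)u} du < ∞`. As `r → 0⁺`, the integrand is at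
least `e^{-(λ+μ)} / (cτ)` on `(r/c, 1]`, so `F(r) ≥ e^{-(λ+μ)} c⁻¹ log (c/r)`.
-/

section AffineSubstitution

variable {E : Type*} [NormedAddCommGroup E] [NormedSpace ℝ E] {c : ℝ}

lemma image_mul_sub_Ioi_div (hc : 0 < c) (r : ℝ) :
    (fun τ => c * τ - r) '' Ioi (r / c) = Ioi 0 := by
  ext u
  simp only [mem_image, mem_Ioi]
  constructor
  · rintro ⟨τ, hτ, rfl⟩
    rw [div_lt_iff₀ hc] at hτ
    linarith
  · intro hu
    refine ⟨(u + r) / c, by gcongr; linarith, by field_simp; ring⟩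

lemma hasDerivWithinAt_mul_sub (c r : ℝ) (s : Set ℝ) (τ : ℝ) :
    HasDerivWithinAt (fun τ => c * τ - r) c s τ := by
  simpa using ((hasDerivAt_id τ).const_mul c).sub_const r |>.hasDerivWithinAt

lemma integrableOn_comp_mul_sub_Ioi_iff (hc : 0 < c) (r : ℝ) (g : ℝ → E) :
    IntegrableOn (fun τ => g (c * τ - r)) (Ioi (r / c)) ↔ IntegrableOn g (Ioi 0) := by
  rw [← image_mul_sub_Ioi_div hc r, integrableOn_image_iff_integrableOn_abs_deriv_smul
    measurableSet_Ioi (fun τ _ => hasDerivWithinAt_mul_sub c r _ τ)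
    (sub_left_injective.comp (mul_right_injective₀ hc.ne')).injOn, abs_of_pos hc]
  exact (integrable_smul_iff hc.ne' _).symm

lemma integral_comp_mul_sub_Ioi (hc : 0 < c) (r : ℝ) (g : ℝ → E) :
    ∫ τ in Ioi (r / c), g (c * τ - r) = c⁻¹ • ∫ u in Ioi 0, g u := by
  rw [← image_mul_sub_Ioi_div hc r, integral_image_eq_integral_abs_deriv_smul
    measurableSet_Ioi (fun τ _ => hasDerivWithinAt_mul_sub c r _ τ)
    (sub_left_injective.comp (mul_right_injective₀ hc.ne')).injOn, abs_of_pos hc,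
    integral_smul, inv_smul_smul₀ hc.ne']

end AffineSubstitution

lemma sqrt_sq_sub_sq_le {a : ℝ} (ha : 0 ≤ a) (b : ℝ) : √(a ^ 2 - b ^ 2) ≤ a :=
  (sqrt_le_sqrt (by nlinarith)).trans_eq (sqrt_sq ha)

lemma sqrt_mul_sqrt_sub_le_sqrt_sq_sub_sq {a b : ℝ} (hb : 0 ≤ b) (hba : b ≤ a) :
    √b * √(a - b) ≤ √(a ^ 2 - b ^ 2) := by
  rw [← sqrt_mul hb]
  exact sqrt_le_sqrt (by nlinarith)

noncomputable def pollutionIntegrand (c lam mu r τ : ℝ) : ℝ :=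
  exp (-(lam + mu) * τ) *
    (exp ((lam / c) * √(c ^ 2 * τ ^ 2 - r ^ 2)) / √(c ^ 2 * τ ^ 2 - r ^ 2))

noncomputable def pollutionDensity (c lam mu r : ℝ) : ℝ :=
  ∫ τ in Ioi (r / c), pollutionIntegrand c lam mu r τ

section Integrand

variable {c lam mu r τ : ℝ}

lemma pollutionIntegrand_nonneg : 0 ≤ pollutionIntegrand c lam mu r τ := by
  unfold pollutionIntegrand; positivity

lemma measurable_pollutionIntegrand : Measurable (pollutionIntegrand c lam mu r) := by
  unfold pollutionIntegrand; fun_prop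

lemma pollutionIntegrand_le (hc : 0 < c) (hlam : 0 ≤ lam) (hmu : 0 ≤ mu) (hr : 0 < r)
    (hτ : r / c < τ) :
    pollutionIntegrand c lam mu r τ ≤
      (√r)⁻¹ * ((c * τ - r) ^ (-(1 / 2) : ℝ) * exp (-(mu / c) * (c * τ - r))) := by
  have hrτ : r < c * τ := by rwa [div_lt_iff₀' hc] at hτ
  have hτ0 : 0 < τ := (div_pos hr hc).trans hτ
  have hS_le : √(c ^ 2 * τ ^ 2 - r ^ 2) ≤ c * τ := by
    simpa [mul_pow] using sqrt_sq_sub_sq_le (mul_pos hc hτ0).le r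
  have hS_ge : √r * √(c * τ - r) ≤ √(c ^ 2 * τ ^ 2 - r ^ 2) := by
    simpa [mul_pow] using sqrt_mul_sqrt_sub_le_sqrt_sq_sub_sq hr.le hrτ.le
  have hpos : 0 < √r * √(c * τ - r) := by
    have := sub_pos.2 hrτ; positivity
  have hexp : exp (-(lam + mu) * τ) * exp ((lam / c) * √(c ^ 2 * τ ^ 2 - r ^ 2)) ≤
      exp (-(mu / c) * (c * τ - r)) := by
    rw [← exp_add, exp_le_exp]
    have : lam / c * √(c ^ 2 * τ ^ 2 - r ^ 2) ≤ lam * τ := by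
      calc lam / c * √(c ^ 2 * τ ^ 2 - r ^ 2) ≤ lam / c * (c * τ) := by gcongr
        _ = lam * τ := by field_simp
    have : 0 ≤ mu * r / c := by positivity
    have : -(mu / c) * (c * τ - r) = -mu * τ + mu * r / c := by field_simp; ring
    linarith
  rw [rpow_neg (sub_pos.2 hrτ).le, ← sqrt_eq_rpow]
  calc pollutionIntegrand c lam mu r τ
      = exp (-(lam + mu) * τ) * exp ((lam / c) * √(c ^ 2 * τ ^ 2 - r ^ 2)) /
          √(c ^ 2 * τ ^ 2 - r ^ 2) := mul_div_assoc' _ _ _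
    _ ≤ exp (-(mu / c) * (c * τ - r)) / (√r * √(c * τ - r)) := by gcongr
    _ = _ := by field_simp

lemma le_pollutionIntegrand (hc : 0 < c) (hlam : 0 ≤ lam) (hmu : 0 ≤ mu) (hr : 0 < r)
    (hτ : τ ∈ Ioc (r / c) 1) :
    exp (-(lam + mu)) * (c⁻¹ * τ⁻¹) ≤ pollutionIntegrand c lam mu r τ := by
  obtain ⟨hτ, hτ1⟩ := hτ
  have hτ0 : 0 < τ := (div_pos hr hc).trans hτ
  have hrτ : r < c * τ := by rwa [div_lt_iff₀' hc] at hτ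
  have hS_pos : 0 < √(c ^ 2 * τ ^ 2 - r ^ 2) := sqrt_pos.2 (by nlinarith)
  have hS_le : √(c ^ 2 * τ ^ 2 - r ^ 2) ≤ c * τ := by
    simpa [mul_pow] using sqrt_sq_sub_sq_le (mul_pos hc hτ0).le r
  have hexp : exp (-(lam + mu)) ≤ exp (-(lam + mu) * τ) := exp_le_exp.2 (by nlinarith)
  have hone : 1 ≤ exp ((lam / c) * √(c ^ 2 * τ ^ 2 - r ^ 2)) := one_le_exp (by positivity)
  calc exp (-(lam + mu)) * (c⁻¹ * τ⁻¹)
      = exp (-(lam + mu)) * (1 / (c * τ)) := by rw [one_div, mul_inv]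
    _ ≤ pollutionIntegrand c lam mu r τ := by
      unfold pollutionIntegrand
      gcongr

end Integrand

lemma integrableOn_rpow_neg_half_mul_exp_neg_mul {b : ℝ} (hb : 0 < b) :
    IntegrableOn (fun u : ℝ => u ^ (-(1 / 2) : ℝ) * exp (-b * u)) (Ioi 0) := by
  simpa using integrableOn_rpow_mul_exp_neg_mul_rpow (p := 1) (s := -(1 / 2)) (by norm_num)
    one_pos hb

section Density

variable {c lam mu r : ℝ}

lemma integrableOn_pollutionIntegrand_majorant (hc : 0 < c) (hmu : 0 < mu) (r : ℝ) :
    IntegrableOn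
      (fun τ => (√r)⁻¹ * ((c * τ - r) ^ (-(1 / 2) : ℝ) * exp (-(mu / c) * (c * τ - r))))
      (Ioi (r / c)) :=
  ((integrableOn_comp_mul_sub_Ioi_iff hc r _).2
    (integrableOn_rpow_neg_half_mul_exp_neg_mul (div_pos hmu hc))).const_mul (√r)⁻¹

lemma integrableOn_pollutionIntegrand (hc : 0 < c) (hlam : 0 ≤ lam) (hmu : 0 < mu)
    (hr : 0 < r) : IntegrableOn (pollutionIntegrand c lam mu r) (Ioi (r / c)) := by
  refine Integrable.mono' (integrableOn_pollutionIntegrand_majorant hc hmu r)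
    measurable_pollutionIntegrand.aestronglyMeasurable ?_
  refine (ae_restrict_iff' measurableSet_Ioi).2 (ae_of_all _ fun τ hτ => ?_)
  rw [norm_of_nonneg pollutionIntegrand_nonneg]
  exact pollutionIntegrand_le hc hlam hmu.le hr hτ

lemma pollutionDensity_le (hc : 0 < c) (hlam : 0 ≤ lam) (hmu : 0 < mu) (hr : 0 < r) :
    pollutionDensity c lam mu r ≤
      (√r)⁻¹ * (c⁻¹ * ∫ u in Ioi 0, u ^ (-(1 / 2) : ℝ) * exp (-(mu / c) * u)) := by
  rw [← smul_eq_mul c⁻¹, ← integral_comp_mul_sub_Ioi hc r, ← integral_const_mul]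
  exact setIntegral_mono_on (integrableOn_pollutionIntegrand hc hlam hmu hr)
    (integrableOn_pollutionIntegrand_majorant hc hmu r) measurableSet_Ioi
    fun τ hτ => pollutionIntegrand_le hc hlam hmu.le hr hτ

lemma exp_mul_log_le_pollutionDensity (hc : 0 < c) (hlam : 0 ≤ lam) (hmu : 0 < mu)
    (hr : 0 < r) (hrc : r < c) :
    exp (-(lam + mu)) * (c⁻¹ * log (c / r)) ≤ pollutionDensity c lam mu r := by
  have hrc' : r / c ≤ 1 := (div_le_one hc).2 hrc.le
  have hlog : ∫ τ in Ioc (r / c) 1, exp (-(lam + mu)) * (c⁻¹ * τ⁻¹) =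
      exp (-(lam + mu)) * (c⁻¹ * log (c / r)) := by
    rw [← intervalIntegral.integral_of_le hrc', intervalIntegral.integral_const_mul,
      intervalIntegral.integral_const_mul, integral_inv_of_pos (div_pos hr hc) one_pos,
      one_div_div]
  have hint := integrableOn_pollutionIntegrand hc hlam hmu hr
  have hint_inv : IntegrableOn (fun τ => exp (-(lam + mu)) * (c⁻¹ * τ⁻¹)) (Ioc (r / c) 1) :=
    (intervalIntegrable_iff_integrableOn_Ioc_of_le hrc').1 <|
      ((intervalIntegrable_inv_iff.2 <| .inr <| notMem_uIcc_of_lt (div_pos hr hc) one_pos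
        ).const_mul c⁻¹).const_mul _
  rw [← hlog]
  calc ∫ τ in Ioc (r / c) 1, exp (-(lam + mu)) * (c⁻¹ * τ⁻¹)
      ≤ ∫ τ in Ioc (r / c) 1, pollutionIntegrand c lam mu r τ :=
        setIntegral_mono_on hint_inv (hint.mono_set Ioc_subset_Ioi_self) measurableSet_Ioc
          fun τ hτ => le_pollutionIntegrand hc hlam hmu.le hr hτ
    _ ≤ pollutionDensity c lam mu r :=
        setIntegral_mono_set hint (ae_of_all _ fun _ => pollutionIntegrand_nonneg)
          Ioc_subset_Ioi_self.eventuallyLE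

lemma tendsto_pollutionDensity_atTop (hc : 0 < c) (hlam : 0 ≤ lam) (hmu : 0 < mu) :
    Tendsto (pollutionDensity c lam mu) atTop (nhds 0) := by
  set K := c⁻¹ * ∫ u in Ioi 0, u ^ (-(1 / 2) : ℝ) * exp (-(mu / c) * u)
  have hK : Tendsto (fun r : ℝ => (√r)⁻¹ * K) atTop (nhds 0) := by
    simpa using (tendsto_inv_atTop_zero.comp tendsto_sqrt_atTop).mul_const K
  refine squeeze_zero' (.of_forall fun r => setIntegral_nonneg measurableSet_Ioi
    fun _ _ => pollutionIntegrand_nonneg) ?_ hK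
  filter_upwards [eventually_gt_atTop 0] with r hr
  exact pollutionDensity_le hc hlam hmu hr

lemma tendsto_pollutionDensity_nhdsGT_zero (hc : 0 < c) (hlam : 0 ≤ lam) (hmu : 0 < mu) :
    Tendsto (pollutionDensity c lam mu) (nhdsWithin 0 (Ioi 0)) atTop := by
  have hlog : Tendsto (fun r : ℝ => log (c / r)) (nhdsWithin 0 (Ioi 0)) atTop := by
    simpa only [div_eq_mul_inv, Function.comp_def] using
      tendsto_log_atTop.comp (tendsto_inv_nhdsGT_zero.const_mul_atTop hc)
  refine tendsto_atTop_mono' _ ?_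
    ((hlog.const_mul_atTop (inv_pos.2 hc)).const_mul_atTop (exp_pos (-(lam + mu))))
  filter_upwards [Ioo_mem_nhdsGT hc] with r hr
  exact exp_mul_log_le_pollutionDensity hc hlam hmu hr.1 hr.2

end Density

theorem stmt17 (c lam mu : ℝ) (hc : 0 < c) (hlam : 0 < lam) (hmu : 0 < mu)
    (F : ℝ → ℝ)
    (hF : ∀ r, F r = ∫ τ in Ioi (r / c),
        Real.exp (-(lam + mu) * τ) *
          (Real.exp ((lam / c) * Real.sqrt (c ^ 2 * τ ^ 2 - r ^ 2)) /
            Real.sqrt (c ^ 2 * τ ^ 2 - r ^ 2))) :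
    Tendsto F atTop (nhds 0) ∧ Tendsto F (nhdsWithin 0 (Ioi 0)) atTop := by
  obtain rfl : F = pollutionDensity c lam mu := funext hF
  exact ⟨tendsto_pollutionDensity_atTop hc hlam.le hmu,
    tendsto_pollutionDensity_nhdsGT_zero hc hlam.le hmu⟩
end
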